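/- arXiv:1212.3499 — 5 statements merged into one kernel-verified Lean document; each statement's English description precedes it below -/
import Mathlib

section
/- Let V be a finite set and ε > 0. Every partition P of V has an ε-balanced refinement Q with |Q| ≤ (1 + ε⁻¹)·|P|. -/
open Finset

/-- `P` is a partition of the finite type `V`: a finite collection of pairwise disjoint
nonempty subsets of `V` whose union is all of `V`. -/
def IsPartition {V : Type*} [Fintype V] [DecidableEq V] (P : Finset (Finset V)) : Prop :=
  (∀ I ∈ P, I.Nonempty) ∧
  (∀ I ∈ P, ∀ J ∈ P, I ≠ J → Disjoint I J) ∧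
  P.sup id = Finset.univ

/-- `Q` is a refinement of `P`: each class of `Q` is contained in some class of `P`. -/
def IsRefinement {V : Type*} [Fintype V] [DecidableEq V] (Q P : Finset (Finset V)) : Prop :=
  ∀ J ∈ Q, ∃ I ∈ P, J ⊆ I

/-- `P` is `ε`-balanced: `P` contains a subcollection `C` of equal-sized sets with
`|V \ ⋃ C| ≤ ε |V|`. -/
def IsBalanced {V : Type*} [Fintype V] [DecidableEq V] (ε : ℝ) (P : Finset (Finset V)) : Prop :=
  ∃ C ⊆ P, (∀ X ∈ C, ∀ Y ∈ C, X.card = Y.card) ∧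
    ((Finset.univ \ C.sup id).card : ℝ) ≤ ε * Fintype.card V


lemma chunk {V : Type*} [DecidableEq V] (m : ℕ) (hm : 0 < m) (s : Finset V) :
    ∃ (T : Finset (Finset V)) (r : Finset V),
      (∀ X ∈ T, X.card = m) ∧
      (∀ X ∈ T, ∀ Y ∈ T, X ≠ Y → Disjoint X Y) ∧
      (∀ X ∈ T, Disjoint X r) ∧
      T.sup id ∪ r = s ∧
      r.card < m ∧
      T.card * m + r.card = s.card := by
  induction s using Finset.strongInduction with
  | _ s ih =>
    by_cases h : s.card < m
    · exact ⟨∅, s, by simp, by simp, by simp, by simp, h, by simp⟩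
    · push_neg at h
      obtain ⟨X, hXs, hX⟩ := Finset.exists_subset_card_eq h
      have hX0 : X.Nonempty := Finset.card_pos.mp (hX ▸ hm)
      have hss : s \ X ⊂ s := by
        apply Finset.sdiff_ssubset hXs hX0
      obtain ⟨T, r, h1, h2, h3, h4, h5, h6⟩ := ih _ hss
      have hsub : ∀ Y ∈ T, Y ⊆ s \ X := fun Y hY => by
        calc Y = id Y := rfl
        _ ⊆ T.sup id := Finset.le_sup hY
        _ ⊆ s \ X := h4 ▸ Finset.subset_union_left
      have hrsub : r ⊆ s \ X := h4 ▸ Finset.subset_union_right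
      have hXT : X ∉ T := by
        intro hmem
        obtain ⟨x, hx⟩ := hX0
        exact (Finset.mem_sdiff.mp (hsub X hmem hx)).2 hx
      refine ⟨insert X T, r, ?_, ?_, ?_, ?_, h5, ?_⟩
      · intro Y hY
        rcases Finset.mem_insert.mp hY with rfl | hY
        · exact hX
        · exact h1 Y hY
      · intro Y hY Z hZ hne
        have dX : ∀ W ∈ T, Disjoint X W := fun W hW =>
          Finset.disjoint_left.mpr fun a ha haW => (Finset.mem_sdiff.mp (hsub W hW haW)).2 ha
        rcases Finset.mem_insert.mp hY with hY | hY <;>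
          rcases Finset.mem_insert.mp hZ with hZ | hZ
        · exact absurd (hY.trans hZ.symm) hne
        · exact hY ▸ dX Z hZ
        · exact hZ ▸ (dX Y hY).symm
        · exact h2 Y hY Z hZ hne
      · intro Y hY
        rcases Finset.mem_insert.mp hY with rfl | hY
        · exact Finset.disjoint_left.mpr fun a ha har => (Finset.mem_sdiff.mp (hrsub har)).2 ha
        · exact h3 Y hY
      · rw [Finset.sup_insert, id]
        have : (X ⊔ T.sup id) ∪ r = X ∪ (T.sup id ∪ r) := by
          rw [Finset.sup_eq_union, Finset.union_assoc]
        rw [this, h4, Finset.union_sdiff_of_subset hXs]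
      · rw [Finset.card_insert_of_notMem hXT]
        have := Finset.card_sdiff_add_card_eq_card hXs
        have hXm := hX
        have hmul : (T.card + 1) * m = T.card * m + m := by ring
        omega

theorem balanced_refinement {V : Type*} [Fintype V] [DecidableEq V]
    (ε : ℝ) (hε : 0 < ε) (P : Finset (Finset V)) (hP : IsPartition P) :
    ∃ Q : Finset (Finset V), IsPartition Q ∧ IsRefinement Q P ∧ IsBalanced ε Q ∧
      (Q.card : ℝ) ≤ (1 + ε⁻¹) * P.card := by
  classical
  obtain ⟨hPne, hPdisj, hPsup⟩ := hP
  set n : ℕ := Fintype.card V with hn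
  set k : ℕ := P.card with hk
  set m : ℕ := ⌊ε * n / k⌋₊ + 1 with hmdef
  have hm : 0 < m := Nat.succ_pos _
  choose T r h1 h2 h3 h4 h5 h6 using fun s : Finset V => chunk m hm s
  have Tsub : ∀ I : Finset V, ∀ X ∈ T I, X ⊆ I := by
    intro I X hX a ha
    have : a ∈ (T I).sup id ∪ r I :=
      Finset.mem_union_left _ (Finset.mem_sup.mpr ⟨X, hX, ha⟩)
    rwa [h4 I] at this
  have rsub : ∀ I : Finset V, r I ⊆ I := by
    intro I a ha
    have : a ∈ (T I).sup id ∪ r I := Finset.mem_union_right _ ha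
    rwa [h4 I] at this
  set Qf : Finset V → Finset (Finset V) :=
    fun I => if r I = ∅ then T I else insert (r I) (T I) with hQf
  have memQf : ∀ I : Finset V, ∀ J, J ∈ Qf I ↔ (J ∈ T I ∨ (J = r I ∧ r I ≠ ∅)) := by
    intro I J
    by_cases h : r I = ∅
    · simp [hQf, h]
    · simp only [hQf, if_neg h, Finset.mem_insert]
      tauto
  have Qfsub : ∀ I : Finset V, ∀ J ∈ Qf I, J ⊆ I := by
    intro I J hJ
    rcases (memQf I J).mp hJ with hJ | ⟨rfl, _⟩
    · exact Tsub I J hJ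
    · exact rsub I
  have TQf : ∀ I : Finset V, T I ⊆ Qf I := by
    intro I X hX; exact (memQf I X).mpr (Or.inl hX)
  set Q : Finset (Finset V) := P.biUnion Qf with hQdef
  set C : Finset (Finset V) := P.biUnion T with hCdef
  have hCQ : C ⊆ Q := by
    intro X hX
    obtain ⟨I, hI, hXI⟩ := Finset.mem_biUnion.mp hX
    exact Finset.mem_biUnion.mpr ⟨I, hI, TQf I hXI⟩
  -- within-class disjointness
  have Qfdisj : ∀ I : Finset V, ∀ J ∈ Qf I, ∀ J' ∈ Qf I, J ≠ J' → Disjoint J J' := by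
    intro I J hJ J' hJ' hne
    rcases (memQf I J).mp hJ with hJ | ⟨rfl, _⟩ <;>
      rcases (memQf I J').mp hJ' with hJ' | ⟨rfl, _⟩
    · exact h2 I J hJ J' hJ' hne
    · exact h3 I J hJ
    · exact (h3 I J' hJ').symm
    · exact absurd rfl hne
  -- partition
  have hQpart : IsPartition Q := by
    refine ⟨?_, ?_, ?_⟩
    · intro J hJ
      obtain ⟨I, hI, hJI⟩ := Finset.mem_biUnion.mp hJ
      rcases (memQf I J).mp hJI with hJT | ⟨rfl, hne⟩
      · exact Finset.card_pos.mp (h1 I J hJT ▸ hm)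
      · exact Finset.nonempty_iff_ne_empty.mpr hne
    · intro J hJ J' hJ' hne
      obtain ⟨I, hI, hJI⟩ := Finset.mem_biUnion.mp hJ
      obtain ⟨I', hI', hJI'⟩ := Finset.mem_biUnion.mp hJ'
      by_cases hII : I = I'
      · exact Qfdisj I J hJI J' (hII ▸ hJI') hne
      · exact Finset.disjoint_of_subset_left (Qfsub I J hJI)
          (Finset.disjoint_of_subset_right (Qfsub I' J' hJI') (hPdisj I hI I' hI' hII))
    · apply Finset.Subset.antisymm (Finset.subset_univ _)
      intro x _
      have hx : x ∈ P.sup id := hPsup ▸ Finset.mem_univ x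
      obtain ⟨I, hI, hxI⟩ := Finset.mem_sup.mp hx
      have hxI' : x ∈ (T I).sup id ∪ r I := by rw [h4 I]; exact hxI
      rcases Finset.mem_union.mp hxI' with hx1 | hx2
      · obtain ⟨X, hX, hxX⟩ := Finset.mem_sup.mp hx1
        exact Finset.mem_sup.mpr ⟨X, Finset.mem_biUnion.mpr ⟨I, hI, TQf I hX⟩, hxX⟩
      · have hrne : r I ≠ ∅ := Finset.nonempty_iff_ne_empty.mp ⟨x, hx2⟩
        exact Finset.mem_sup.mpr ⟨r I,
          Finset.mem_biUnion.mpr ⟨I, hI, (memQf I (r I)).mpr (Or.inr ⟨rfl, hrne⟩)⟩, hx2⟩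
  -- refinement
  have hQref : IsRefinement Q P := by
    intro J hJ
    obtain ⟨I, hI, hJI⟩ := Finset.mem_biUnion.mp hJ
    exact ⟨I, hI, Qfsub I J hJI⟩
  -- sum of class sizes is n
  have hsumP : ∑ I ∈ P, I.card = n := by
    have : P.sup id = P.biUnion id := Finset.sup_eq_biUnion P id
    have hcard : (P.biUnion id).card = ∑ I ∈ P, I.card :=
      Finset.card_biUnion (fun I hI J hJ hne => hPdisj I hI J hJ hne)
    rw [hn, ← Finset.card_univ, ← hPsup, this, hcard]
  -- balanced
  have hbal : IsBalanced ε Q := by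
    refine ⟨C, hCQ, ?_, ?_⟩
    · intro X hX Y hY
      obtain ⟨I, _, hXI⟩ := Finset.mem_biUnion.mp hX
      obtain ⟨I', _, hYI⟩ := Finset.mem_biUnion.mp hY
      rw [h1 I X hXI, h1 I' Y hYI]
    · have hsubR : Finset.univ \ C.sup id ⊆ P.biUnion r := by
        intro x hx
        obtain ⟨-, hx2⟩ := Finset.mem_sdiff.mp hx
        have hxP : x ∈ P.sup id := hPsup ▸ Finset.mem_univ x
        obtain ⟨I, hI, hxI⟩ := Finset.mem_sup.mp hxP
        have hxI' : x ∈ (T I).sup id ∪ r I := by rw [h4 I]; exact hxI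
        rcases Finset.mem_union.mp hxI' with hx1 | hx'
        · exfalso
          obtain ⟨X, hX, hxX⟩ := Finset.mem_sup.mp hx1
          exact hx2 (Finset.mem_sup.mpr ⟨X, Finset.mem_biUnion.mpr ⟨I, hI, hX⟩, hxX⟩)
        · exact Finset.mem_biUnion.mpr ⟨I, hI, hx'⟩
      have hcard1 : (Finset.univ \ C.sup id).card ≤ ∑ I ∈ P, (r I).card :=
        le_trans (Finset.card_le_card hsubR) (Finset.card_biUnion_le)
      have hcard2 : ∑ I ∈ P, (r I).card ≤ k * (m - 1) := by
        calc ∑ I ∈ P, (r I).card ≤ ∑ _I ∈ P, (m - 1) :=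
              Finset.sum_le_sum (fun I _ => Nat.le_sub_one_of_lt (h5 I))
        _ = k * (m - 1) := by rw [Finset.sum_const, smul_eq_mul, hk]
      have hm1 : m - 1 = ⌊ε * n / k⌋₊ := by omega
      have hreal : ((k * (m - 1) : ℕ) : ℝ) ≤ ε * n := by
        rw [hm1]
        push_cast
        rcases Nat.eq_zero_or_pos k with hk0 | hk0
        · rw [hk0]; simp; positivity
        · have hkR : (0:ℝ) < k := by exact_mod_cast hk0
          have hfl : (⌊ε * n / k⌋₊ : ℝ) ≤ ε * n / k := Nat.floor_le (by positivity)
          calc (k:ℝ) * ⌊ε * n / k⌋₊ ≤ k * (ε * n / k) := by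
                exact mul_le_mul_of_nonneg_left hfl (le_of_lt hkR)
          _ = ε * n := by field_simp
      calc ((Finset.univ \ C.sup id).card : ℝ) ≤ ((k * (m-1) : ℕ) : ℝ) := by
            exact_mod_cast le_trans hcard1 hcard2
      _ ≤ ε * n := hreal
      -- goal: ≤ ε * Fintype.card V, n = Fintype.card V defeq via set
  -- cardinality bound
  have hQcard : (Q.card : ℝ) ≤ (1 + ε⁻¹) * k := by
    set S : ℕ := ∑ I ∈ P, (T I).card with hS
    have hQle : Q.card ≤ S + k := by
      calc Q.card ≤ ∑ I ∈ P, (Qf I).card := Finset.card_biUnion_le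
      _ ≤ ∑ I ∈ P, ((T I).card + 1) := by
          apply Finset.sum_le_sum
          intro I _
          by_cases h : r I = ∅
          · simp only [hQf, if_pos h]; omega
          · simp only [hQf, if_neg h]; exact Finset.card_insert_le _ _
      _ = S + k := by rw [Finset.sum_add_distrib, Finset.sum_const, smul_eq_mul, mul_one, hS, hk]
    have hSm : S * m ≤ n := by
      calc S * m = ∑ I ∈ P, (T I).card * m := by rw [hS, Finset.sum_mul]
      _ ≤ ∑ I ∈ P, ((T I).card * m + (r I).card) := Finset.sum_le_sum (fun I _ => Nat.le_add_right _ _)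
      _ = ∑ I ∈ P, I.card := Finset.sum_congr rfl (fun I _ => h6 I)
      _ = n := hsumP
    have hSreal : (S : ℝ) ≤ ε⁻¹ * k := by
      rcases Nat.eq_zero_or_pos k with hk0 | hk0
      · have hP0 : P = ∅ := Finset.card_eq_zero.mp hk0
        have : S = 0 := by rw [hS, hP0, Finset.sum_empty]
        rw [this, hk0]; simp
      · have hkR : (0:ℝ) < k := by exact_mod_cast hk0
        have hlt : ε * n / k < ⌊ε * n / k⌋₊ + 1 := Nat.lt_floor_add_one _
        have hmn : ε * n ≤ k * m := by
          have : ε * n / k < m := by rw [hmdef]; push_cast; exact hlt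
          calc ε * n = k * (ε * n / k) := by field_simp
          _ ≤ k * m := by
              apply mul_le_mul_of_nonneg_left (le_of_lt this) (le_of_lt hkR)
        have hSmR : (S : ℝ) * m ≤ n := by exact_mod_cast hSm
        have hmR : (1:ℝ) ≤ m := by exact_mod_cast hm
        have hεS : ε * S ≤ k := by nlinarith
        rw [inv_mul_eq_div, le_div_iff₀ hε]
        linarith [hεS]
    calc (Q.card : ℝ) ≤ ((S + k : ℕ) : ℝ) := by exact_mod_cast hQle
    _ = (S : ℝ) + k := by push_cast; ring
    _ ≤ ε⁻¹ * k + k := by linarith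
    _ = (1 + ε⁻¹) * k := by ring
  exact ⟨Q, hQpart, hQref, hbal, by rw [hk] at hQcard; exact hQcard⟩
end

section
/- Let ε > 0 and let G = (V, E) be a finite simple graph with adjacency matrix A ∈ ℝ^{V×V}. If P is a partition of V that is not ε-regular, then P has a refinement Q with |Q| ≤ |P|·4^{|P|} and ‖A_Q‖² > ‖A_P‖² + ε⁵·|V|², where ‖·‖ is the Frobenius norm. -/
open Finset

/-- The edge density of the pair `(I, J)` in the graph `G`. -/
noncomputable def density {V : Type*} [Fintype V] [DecidableEq V] (G : SimpleGraph V)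
    [DecidableRel G.Adj] (I J : Finset V) : ℝ :=
  (((I ×ˢ J).filter fun p => G.Adj p.1 p.2).card : ℝ) / (I.card * J.card)

/-- The pair `(I, J)` is `ε`-regular. -/
def IsRegularPair {V : Type*} [Fintype V] [DecidableEq V] (G : SimpleGraph V)
    [DecidableRel G.Adj] (ε : ℝ) (I J : Finset V) : Prop :=
  ∀ X ⊆ I, ∀ Y ⊆ J, (X.card : ℝ) > ε * I.card → (Y.card : ℝ) > ε * J.card →
    |density G X Y - density G I J| ≤ ε

open scoped Classical in
/-- The partition `P` is `ε`-regular. -/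
noncomputable def IsRegularPartition {V : Type*} [Fintype V] [DecidableEq V] (G : SimpleGraph V)
    [DecidableRel G.Adj] (ε : ℝ) (P : Finset (Finset V)) : Prop :=
  ∑ I ∈ P, ∑ J ∈ P, (if IsRegularPair G ε I J then 0 else (I.card * J.card : ℝ))
    ≤ ε * (Fintype.card V) ^ 2

/-- The orthogonal projection of `M` onto matrices constant on `I × J` and `0` outside:
its entries on `I × J` all equal the average of `M` over `I × J`. -/
noncomputable def proj {V : Type*} [Fintype V] [DecidableEq V] (M : Matrix V V ℝ)
    (I J : Finset V) : Matrix V V ℝ :=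
  fun i j => if i ∈ I ∧ j ∈ J then (∑ x ∈ I, ∑ y ∈ J, M x y) / (I.card * J.card) else 0

/-- `M_P = ∑_{I, J ∈ P} M_{I,J}`. -/
noncomputable def projPartition {V : Type*} [Fintype V] [DecidableEq V] (M : Matrix V V ℝ)
    (P : Finset (Finset V)) : Matrix V V ℝ :=
  ∑ I ∈ P, ∑ J ∈ P, proj M I J

/-- The Frobenius norm `‖M‖ = Tr(Mᵀ M)^{1/2}`. -/
noncomputable def frobNorm {V : Type*} [Fintype V] (M : Matrix V V ℝ) : ℝ :=
  Real.sqrt (Matrix.trace (M.transpose * M))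

/-!
Write `D = A_Q - A_P`. Since `A_P` is constant on the blocks of `Q` and averaging over the blocks
of `Q` is an orthogonal projection, `‖A_Q‖² = ‖A_P‖² + ‖D‖²`. Cutting every part of `P` along the
witnesses `X ⊆ I`, `Y ⊆ J` of its irregular pairs makes each `X × Y` a union of blocks of `Q`, so
the average of `D` on `X × Y` is `d(X, Y) - d(I, J)`, of modulus `> ε`. By Cauchy–Schwarz,
`∑_{X × Y} D² ≥ |X||Y| ε² ≥ ε⁴ |I||J|`, and summing over the irregular pairs, whose total weight
exceeds `ε |V|²`, gives `‖D‖² > ε⁵ |V|²`.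
-/

namespace Finpartition

variable {α : Type*} [DecidableEq α] {s : Finset α}

theorem sum_eq_sum_parts {β : Type*} [AddCommMonoid β] (R : Finpartition s) (f : α → β) :
    ∑ i ∈ s, f i = ∑ a ∈ R.parts, ∑ i ∈ a, f i := by
  conv_lhs => rw [← R.biUnion_parts]
  exact sum_biUnion R.disjoint

theorem subset_or_disjoint_of_mem_atomise {F : Finset (Finset α)} {t u : Finset α} (ht : t ∈ F)
    (hu : u ∈ (atomise s F).parts) : u ⊆ t ∨ Disjoint u t := by
  obtain ⟨-, R, -, rfl⟩ := mem_atomise.1 hu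
  by_cases htR : t ∈ R
  · exact Or.inl fun i hi => ((mem_filter.1 hi).2 t ht).1 htR
  · exact Or.inr <| disjoint_left.2 fun i hi hit => htR (((mem_filter.1 hi).2 t ht).2 hit)

theorem exists_le_forall_subset_or_disjoint (P : Finpartition s) (F : Finset α → Finset (Finset α))
    {k : ℕ} (hFP : ∀ I ∈ P.parts, ∀ t ∈ F I, t ⊆ I) (hFk : ∀ I ∈ P.parts, #(F I) ≤ k) :
    ∃ Q : Finpartition s, Q ≤ P ∧ #Q.parts ≤ #P.parts * 2 ^ k ∧
      ∀ I ∈ P.parts, ∀ t ∈ F I, ∀ u ∈ Q.parts, u ⊆ t ∨ Disjoint u t := by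
  refine ⟨P.bind fun I _ => atomise I (F I), fun u hu => ?_, ?_, fun I hI t ht u hu => ?_⟩
  · obtain ⟨I, hI, hu⟩ := mem_bind.1 hu
    exact ⟨I, hI, (atomise I (F I)).le hu⟩
  · rw [card_bind, ← card_attach (s := P.parts), ← smul_eq_mul]
    exact sum_le_card_nsmul _ _ _ fun I _ =>
      card_atomise_le.trans (Nat.pow_le_pow_right two_pos (hFk I I.2))
  · obtain ⟨I', hI', hu⟩ := mem_bind.1 hu
    by_cases hII' : I' = I
    · subst hII'
      exact subset_or_disjoint_of_mem_atomise ht hu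
    · exact Or.inr <| (P.disjoint hI' hI hII').mono ((atomise I' (F I')).le hu) (hFP I hI t ht)

end Finpartition

section Frobenius

variable {V : Type*} [Fintype V]

def frobInner (M N : Matrix V V ℝ) : ℝ := ∑ i, ∑ j, M i j * N i j

theorem frobNorm_sq (M : Matrix V V ℝ) :
    frobNorm M ^ 2 = frobInner M M := by
  have htrace : Matrix.trace (M.transpose * M) = frobInner M M := by
    simp only [Matrix.trace, Matrix.diag, Matrix.mul_apply, Matrix.transpose_apply, frobInner]
    exact sum_comm
  rw [frobNorm, htrace, Real.sq_sqrt]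
  exact sum_nonneg fun i _ => sum_nonneg fun j _ => mul_self_nonneg _

theorem frobInner_self_eq_add_of_frobInner_eq {X Y : Matrix V V ℝ}
    (h : frobInner X Y = frobInner Y Y) :
    frobInner X X = frobInner Y Y + frobInner (X - Y) (X - Y) := by
  have hexpand : frobInner (X - Y) (X - Y) = frobInner X X - 2 * frobInner X Y + frobInner Y Y := by
    simp only [frobInner, Matrix.sub_apply, mul_sum, ← sum_sub_distrib, ← sum_add_distrib]
    exact sum_congr rfl fun i _ => sum_congr rfl fun j _ => by ring
  linarith

end Frobenius

section BlockAverage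

variable {V : Type*}

noncomputable def blockAvg (M : Matrix V V ℝ) (X Y : Finset V) : ℝ :=
  (∑ x ∈ X, ∑ y ∈ Y, M x y) / (#X * #Y)

theorem blockAvg_sub (M N : Matrix V V ℝ) (X Y : Finset V) :
    blockAvg (M - N) X Y = blockAvg M X Y - blockAvg N X Y := by
  simp only [blockAvg, Matrix.sub_apply, sum_sub_distrib, sub_div]

theorem card_mul_card_mul_blockAvg_sq_le (M : Matrix V V ℝ) (X Y : Finset V) :
    #X * #Y * blockAvg M X Y ^ 2 ≤ ∑ x ∈ X, ∑ y ∈ Y, M x y ^ 2 := by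
  have hcs := sq_sum_le_card_mul_sum_sq (s := X ×ˢ Y) (f := fun p => M p.1 p.2)
  rw [sum_product, sum_product, card_product, Nat.cast_mul] at hcs
  rcases eq_or_lt_of_le (by positivity : (0 : ℝ) ≤ #X * #Y) with h0 | hpos
  · rw [← h0, zero_mul]
    exact sum_nonneg fun x _ => sum_nonneg fun y _ => sq_nonneg _
  · rw [blockAvg, div_pow, ← mul_div_assoc, div_le_iff₀ (by positivity)]
    nlinarith

end BlockAverage

section BlockConstant

variable {V : Type*} [Fintype V] [DecidableEq V]

def IsBlockConst (R : Finpartition (univ : Finset V)) (N : Matrix V V ℝ) : Prop :=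
  ∀ i i' j j', R.part i = R.part i' → R.part j = R.part j' → N i j = N i' j'

theorem IsBlockConst.mono {P Q : Finpartition (univ : Finset V)} {N : Matrix V V ℝ} (hQP : Q ≤ P)
    (hN : IsBlockConst P N) : IsBlockConst Q N := by
  have hpart : ∀ i i', Q.part i = Q.part i' → P.part i = P.part i' := by
    intro i i' hii'
    obtain ⟨I, hI, hQI⟩ := hQP (Q.part_mem.2 (mem_univ i))
    have hi' : i' ∈ Q.part i := hii' ▸ Q.mem_part (mem_univ i')
    rw [P.part_eq_of_mem hI (hQI (Q.mem_part (mem_univ i))), P.part_eq_of_mem hI (hQI hi')]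
  exact fun i i' j j' hi hj => hN i i' j j' (hpart i i' hi) (hpart j j' hj)

variable (R : Finpartition (univ : Finset V))

theorem sum_sum_eq_sum_parts (f : V → V → ℝ) :
    ∑ i, ∑ j, f i j = ∑ a ∈ R.parts, ∑ b ∈ R.parts, ∑ i ∈ a, ∑ j ∈ b, f i j := by
  rw [R.sum_eq_sum_parts]
  refine sum_congr rfl fun a _ => ?_
  rw [sum_comm, R.sum_eq_sum_parts]
  exact sum_congr rfl fun b _ => sum_comm

theorem projPartition_apply (M : Matrix V V ℝ) (i j : V) :
    projPartition M R.parts i j = blockAvg M (R.part i) (R.part j) := by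
  have hi := R.part_mem.2 (mem_univ i)
  have hj := R.part_mem.2 (mem_univ j)
  simp only [projPartition, Matrix.sum_apply]
  rw [sum_eq_single (R.part i), sum_eq_single (R.part j)]
  · simp [proj, blockAvg]
  · intro J hJ hJj
    have hjJ : j ∉ J := fun h => hJj (R.part_eq_of_mem hJ h).symm
    simp [proj, hjJ]
  · exact fun h => absurd hj h
  · intro I hI hIi
    refine sum_eq_zero fun J _ => ?_
    have hiI : i ∉ I := fun h => hIi (R.part_eq_of_mem hI h).symm
    simp [proj, hiI]
  · exact fun h => absurd hi h

theorem isBlockConst_projPartition (M : Matrix V V ℝ) : IsBlockConst R (projPartition M R.parts) :=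
  fun i i' j j' hi hj => by rw [projPartition_apply, projPartition_apply, hi, hj]

theorem frobInner_projPartition {N : Matrix V V ℝ} (hN : IsBlockConst R N) (M : Matrix V V ℝ) :
    frobInner (projPartition M R.parts) N = frobInner M N := by
  rw [frobInner, frobInner, sum_sum_eq_sum_parts R, sum_sum_eq_sum_parts R]
  refine sum_congr rfl fun a ha => sum_congr rfl fun b hb => ?_
  obtain ⟨i₀, hi₀⟩ := R.nonempty_of_mem_parts ha
  obtain ⟨j₀, hj₀⟩ := R.nonempty_of_mem_parts hb
  have hN₀ : ∀ i ∈ a, ∀ j ∈ b, N i j = N i₀ j₀ := fun i hi j hj =>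
    hN i i₀ j j₀ ((R.part_eq_of_mem ha hi).trans (R.part_eq_of_mem ha hi₀).symm)
      ((R.part_eq_of_mem hb hj).trans (R.part_eq_of_mem hb hj₀).symm)
  have hM : ∀ i ∈ a, ∀ j ∈ b, projPartition M R.parts i j = blockAvg M a b := fun i hi j hj => by
    rw [projPartition_apply, R.part_eq_of_mem ha hi, R.part_eq_of_mem hb hj]
  have hcard : (#a * #b : ℝ) ≠ 0 := by
    have := (R.nonempty_of_mem_parts ha).card_pos
    have := (R.nonempty_of_mem_parts hb).card_pos
    positivity
  calc ∑ i ∈ a, ∑ j ∈ b, projPartition M R.parts i j * N i j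
      = #a * #b * blockAvg M a b * N i₀ j₀ := by
        simp (disch := assumption) only [hM, hN₀, sum_const, nsmul_eq_mul]; ring
    _ = ∑ i ∈ a, ∑ j ∈ b, M i j * N i j := by
        rw [blockAvg, mul_div_cancel₀ _ hcard, sum_mul]
        simp (disch := assumption) only [sum_mul, hN₀]

theorem frobInner_projPartition_of_le {P Q : Finpartition (univ : Finset V)} (hQP : Q ≤ P)
    (M : Matrix V V ℝ) :
    frobInner (projPartition M Q.parts) (projPartition M Q.parts) =
      frobInner (projPartition M P.parts) (projPartition M P.parts) +
        frobInner (projPartition M Q.parts - projPartition M P.parts)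
          (projPartition M Q.parts - projPartition M P.parts) := by
  refine frobInner_self_eq_add_of_frobInner_eq ?_
  have hP := isBlockConst_projPartition P M
  rw [frobInner_projPartition Q (hP.mono hQP), frobInner_projPartition P hP]

end BlockConstant

section Boxes

variable {V : Type*} [Fintype V] [DecidableEq V]

def boxIndicator (X Y : Finset V) : Matrix V V ℝ :=
  Matrix.of fun i j => if i ∈ X ∧ j ∈ Y then 1 else 0

theorem frobInner_boxIndicator (M : Matrix V V ℝ) (X Y : Finset V) :
    frobInner M (boxIndicator X Y) = ∑ x ∈ X, ∑ y ∈ Y, M x y := by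
  simp only [frobInner, boxIndicator, Matrix.of_apply, mul_ite, mul_one, mul_zero, ite_and,
    sum_ite_irrel, sum_const_zero, sum_ite_mem, univ_inter]

theorem isBlockConst_boxIndicator {R : Finpartition (univ : Finset V)} {X Y : Finset V}
    (hX : ∀ u ∈ R.parts, u ⊆ X ∨ Disjoint u X) (hY : ∀ u ∈ R.parts, u ⊆ Y ∨ Disjoint u Y) :
    IsBlockConst R (boxIndicator X Y) := by
  have hmem : ∀ {Z : Finset V}, (∀ u ∈ R.parts, u ⊆ Z ∨ Disjoint u Z) →
      ∀ i i', R.part i = R.part i' → (i ∈ Z ↔ i' ∈ Z) := by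
    intro Z hZ i i' hii'
    have hi := R.mem_part (mem_univ i)
    have hi' : i' ∈ R.part i := hii' ▸ R.mem_part (mem_univ i')
    rcases hZ _ (R.part_mem.2 (mem_univ i)) with hsub | hdisj
    · exact iff_of_true (hsub hi) (hsub hi')
    · exact iff_of_false (disjoint_left.1 hdisj hi) (disjoint_left.1 hdisj hi')
  intro i i' j j' hi hj
  simp only [boxIndicator, Matrix.of_apply, hmem hX i i' hi, hmem hY j j' hj]

theorem blockAvg_projPartition_of_forall_subset_or_disjoint (R : Finpartition (univ : Finset V))
    {X Y : Finset V} (hX : ∀ u ∈ R.parts, u ⊆ X ∨ Disjoint u X)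
    (hY : ∀ u ∈ R.parts, u ⊆ Y ∨ Disjoint u Y) (M : Matrix V V ℝ) :
    blockAvg (projPartition M R.parts) X Y = blockAvg M X Y := by
  rw [blockAvg, blockAvg, ← frobInner_boxIndicator, ← frobInner_boxIndicator,
    frobInner_projPartition R (isBlockConst_boxIndicator hX hY)]

theorem blockAvg_projPartition_of_subset (R : Finpartition (univ : Finset V)) {I J X Y : Finset V}
    (hI : I ∈ R.parts) (hJ : J ∈ R.parts) (hXI : X ⊆ I) (hYJ : Y ⊆ J) (hX : X.Nonempty)
    (hY : Y.Nonempty) (M : Matrix V V ℝ) :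
    blockAvg (projPartition M R.parts) X Y = blockAvg M I J := by
  have hconst : ∀ x ∈ X, ∀ y ∈ Y, projPartition M R.parts x y = blockAvg M I J :=
    fun x hx y hy => by
      rw [projPartition_apply, R.part_eq_of_mem hI (hXI hx), R.part_eq_of_mem hJ (hYJ hy)]
  have hcard : (#X * #Y : ℝ) ≠ 0 := by
    have := hX.card_pos
    have := hY.card_pos
    positivity
  have hsum : ∑ x ∈ X, ∑ y ∈ Y, projPartition M R.parts x y = #X * #Y * blockAvg M I J := by
    rw [sum_congr rfl fun x hx => sum_congr rfl fun y hy => hconst x hx y hy]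
    simp only [sum_const, nsmul_eq_mul]
    ring
  rw [blockAvg, hsum, mul_div_cancel_left₀ _ hcard]

end Boxes

section Increment

variable {V : Type*} [Fintype V] [DecidableEq V]

theorem card_mul_card_mul_sq_sub_blockAvg_le {P Q : Finpartition (univ : Finset V)}
    {I J X Y : Finset V} (hI : I ∈ P.parts) (hJ : J ∈ P.parts) (hXI : X ⊆ I) (hYJ : Y ⊆ J)
    (hX : X.Nonempty) (hY : Y.Nonempty) (hXQ : ∀ u ∈ Q.parts, u ⊆ X ∨ Disjoint u X)
    (hYQ : ∀ u ∈ Q.parts, u ⊆ Y ∨ Disjoint u Y) (M : Matrix V V ℝ) :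
    #X * #Y * (blockAvg M X Y - blockAvg M I J) ^ 2 ≤
      ∑ i ∈ I, ∑ j ∈ J, (projPartition M Q.parts - projPartition M P.parts) i j ^ 2 := by
  set D := projPartition M Q.parts - projPartition M P.parts
  have hdev : blockAvg D X Y = blockAvg M X Y - blockAvg M I J := by
    rw [blockAvg_sub, blockAvg_projPartition_of_forall_subset_or_disjoint Q hXQ hYQ,
      blockAvg_projPartition_of_subset P hI hJ hXI hYJ hX hY]
  calc #X * #Y * (blockAvg M X Y - blockAvg M I J) ^ 2
      ≤ ∑ x ∈ X, ∑ y ∈ Y, D x y ^ 2 := hdev ▸ card_mul_card_mul_blockAvg_sq_le D X Y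
    _ ≤ ∑ x ∈ X, ∑ y ∈ J, D x y ^ 2 :=
        sum_le_sum fun x _ => sum_le_sum_of_subset_of_nonneg hYJ fun _ _ _ => sq_nonneg _
    _ ≤ ∑ x ∈ I, ∑ y ∈ J, D x y ^ 2 :=
        sum_le_sum_of_subset_of_nonneg hXI fun _ _ _ => sum_nonneg fun _ _ => sq_nonneg _

variable (G : SimpleGraph V) [DecidableRel G.Adj] {ε : ℝ}

theorem blockAvg_adjMatrix (X Y : Finset V) : blockAvg (G.adjMatrix ℝ) X Y = density G X Y := by
  simp only [blockAvg, density, SimpleGraph.adjMatrix_apply]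
  rw [← sum_product', sum_boole]

theorem pow_four_mul_card_mul_card_le_sum_sq (hε : 0 < ε) {P Q : Finpartition (univ : Finset V)}
    {I J X Y : Finset V} (hI : I ∈ P.parts) (hJ : J ∈ P.parts) (hXI : X ⊆ I) (hYJ : Y ⊆ J)
    (hXQ : ∀ u ∈ Q.parts, u ⊆ X ∨ Disjoint u X) (hYQ : ∀ u ∈ Q.parts, u ⊆ Y ∨ Disjoint u Y)
    (hXcard : ε * #I < #X) (hYcard : ε * #J < #Y) (hdev : ε < |density G X Y - density G I J|) :
    ε ^ 4 * (#I * #J) ≤ ∑ i ∈ I, ∑ j ∈ J,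
      (projPartition (G.adjMatrix ℝ) Q.parts - projPartition (G.adjMatrix ℝ) P.parts) i j ^ 2 := by
  have hX : X.Nonempty :=
    card_pos.1 <| Nat.cast_pos.1 <| (by positivity : 0 ≤ ε * #I).trans_lt hXcard
  have hY : Y.Nonempty :=
    card_pos.1 <| Nat.cast_pos.1 <| (by positivity : 0 ≤ ε * #J).trans_lt hYcard
  refine le_trans ?_ (card_mul_card_mul_sq_sub_blockAvg_le hI hJ hXI hYJ hX hY hXQ hYQ _)
  rw [blockAvg_adjMatrix, blockAvg_adjMatrix, ← sq_abs]
  calc ε ^ 4 * (#I * #J) = (ε * #I) * (ε * #J) * ε ^ 2 := by ring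
    _ ≤ #X * #Y * |density G X Y - density G I J| ^ 2 := by gcongr

open scoped Classical in
theorem pow_five_mul_card_sq_lt_frobInner (hε : 0 < ε) (R : Finpartition (univ : Finset V))
    (hirr : ¬ IsRegularPartition G ε R.parts) (D : Matrix V V ℝ)
    (hD : ∀ I ∈ R.parts, ∀ J ∈ R.parts, ¬ IsRegularPair G ε I J →
      ε ^ 4 * (#I * #J) ≤ ∑ i ∈ I, ∑ j ∈ J, D i j ^ 2) :
    ε ^ 5 * Fintype.card V ^ 2 < frobInner D D := by
  rw [IsRegularPartition, not_le] at hirr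
  calc ε ^ 5 * Fintype.card V ^ 2 = ε ^ 4 * (ε * Fintype.card V ^ 2) := by ring
    _ < ε ^ 4 * ∑ I ∈ R.parts, ∑ J ∈ R.parts,
          if IsRegularPair G ε I J then 0 else (#I * #J : ℝ) := by gcongr
    _ ≤ ∑ I ∈ R.parts, ∑ J ∈ R.parts, ∑ i ∈ I, ∑ j ∈ J, D i j ^ 2 := by
        simp only [mul_sum]
        gcongr with I hI J hJ
        split_ifs with hreg
        · rw [mul_zero]
          exact sum_nonneg fun _ _ => sum_nonneg fun _ _ => sq_nonneg _
        · exact hD I hI J hJ hreg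
    _ = frobInner D D := by
        rw [frobInner, sum_sum_eq_sum_parts R]
        simp only [sq]

theorem exists_subset_subset_of_not_isRegularPair (I J : Finset V) :
    ∃ X ⊆ I, ∃ Y ⊆ J, ¬ IsRegularPair G ε I J →
      ε * #I < #X ∧ ε * #J < #Y ∧ ε < |density G X Y - density G I J| := by
  by_cases hreg : IsRegularPair G ε I J
  · exact ⟨I, subset_rfl, J, subset_rfl, fun h => absurd hreg h⟩
  · simp only [IsRegularPair, not_forall, not_le, gt_iff_lt, exists_prop] at hreg
    obtain ⟨X, hXI, Y, hYJ, hX, hY, hdev⟩ := hreg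
    exact ⟨X, hXI, Y, hYJ, fun _ => ⟨hX, hY, hdev⟩⟩

end Increment

section Partitions

variable {V : Type*} [Fintype V] [DecidableEq V]

@[simps]
def IsPartition.toFinpartition {P : Finset (Finset V)} (hP : IsPartition P) :
    Finpartition (univ : Finset V) where
  parts := P
  supIndep := supIndep_iff_pairwiseDisjoint.2 fun I hI J hJ => hP.2.1 I hI J hJ
  sup_parts := hP.2.2
  bot_notMem h := not_nonempty_empty (hP.1 ⊥ h)

theorem Finpartition.isPartition (R : Finpartition (univ : Finset V)) : IsPartition R.parts :=
  ⟨fun _ => R.nonempty_of_mem_parts, fun _ hI _ hJ => R.disjoint hI hJ, R.sup_parts⟩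

end Partitions

theorem irregular_partition_refinement {V : Type*} [Fintype V] [DecidableEq V]
    (ε : ℝ) (hε : 0 < ε) (G : SimpleGraph V) [DecidableRel G.Adj]
    (A : Matrix V V ℝ) (hA : A = G.adjMatrix ℝ)
    (P : Finset (Finset V)) (hP : IsPartition P)
    (hirr : ¬ IsRegularPartition G ε P) :
    ∃ Q : Finset (Finset V), IsPartition Q ∧ IsRefinement Q P ∧
      Q.card ≤ P.card * 4 ^ P.card ∧
      frobNorm (projPartition A Q) ^ 2 >
        frobNorm (projPartition A P) ^ 2 + ε ^ 5 * (Fintype.card V) ^ 2 := by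
  subst hA
  choose X hXI Y hYJ hwit using exists_subset_subset_of_not_isRegularPair G (ε := ε)
  -- Each part `I` is cut along the at most `2|P|` witness sets `X I J` and `Y J I` inside it.
  obtain ⟨Q, hQP, hcard, hcut⟩ := hP.toFinpartition.exists_le_forall_subset_or_disjoint
    (fun I => P.image (X I) ∪ P.image (Y · I)) (k := 2 * #P)
    (fun I _ t ht => by
      simp only [mem_union, mem_image] at ht
      rcases ht with ⟨J, -, rfl⟩ | ⟨J, -, rfl⟩
      exacts [hXI I J, hYJ J I])
    (fun I _ => (card_union_le _ _).trans <| two_mul #P ▸ add_le_add card_image_le card_image_le)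
  refine ⟨Q.parts, Q.isPartition, fun u hu => hQP hu, by simpa [pow_mul] using hcard, ?_⟩
  rw [gt_iff_lt, frobNorm_sq, frobNorm_sq, ← hP.toFinpartition_parts,
    frobInner_projPartition_of_le hQP, add_lt_add_iff_left]
  refine pow_five_mul_card_sq_lt_frobInner G hε hP.toFinpartition hirr _
    fun I hI J hJ hirrIJ => ?_
  obtain ⟨hXcard, hYcard, hdev⟩ := hwit I J hirrIJ
  exact pow_four_mul_card_mul_card_le_sum_sq G hε hI hJ (hXI I J) (hYJ I J)
    (fun u hu => hcut I hI _ (mem_union_left _ (mem_image_of_mem _ hJ)) u hu)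
    (fun u hu => hcut J hJ _ (mem_union_right _ (mem_image_of_mem _ hI)) u hu) hXcard hYcard hdev
end

section
/- (Szemerédi's regularity lemma.) For each ε > 0 and each finite simple graph G = (V, E), every partition P of V has a refinement that is both ε-balanced and ε-regular and has at most f_ε^{⌊ε⁻⁵⌋}((1 + ε⁻¹)·|P|) classes, where f_ε(x) := (1 + ε⁻¹)·x·4^x and f_ε^n denotes the n-th iterate of f_ε. -/
open Finset

/-- The bound function `f_ε(x) = (1 + ε⁻¹) x 4^x`. -/
noncomputable def boundFun (ε : ℝ) (x : ℝ) : ℝ := (1 + ε⁻¹) * x * (4 : ℝ) ^ x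

/-!
The index `∑ |I| |J| d(I, J)²` of a partition lies in `[0, |V|²]` and does not decrease under
refinement (Cauchy–Schwarz). If a partition is not `ε`-regular, cutting each class by the Venn
diagram of the witnesses of irregularity (at most `4^|P|` atoms per class) raises the index by more
than `ε⁵ |V|²`. Cutting every class into chunks of a common size plus one remainder makes a
partition `ε`-balanced, costs a factor `1 + ε⁻¹` in the number of classes and does not lower the
index. Alternating the two steps, each round applies `f_ε` to the number of classes, and an
`ε`-regular partition is reached within `⌊ε⁻⁵⌋` rounds.
-/

-- The defect in Cauchy–Schwarz is the weighted variance of `e i / w i` over `s`; bounding its part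
-- over `t` by Cauchy–Schwarz again gives the second term.
theorem sq_sum_div_add_mul_sq_le_sum_sq_div {ι : Type*} {s t : Finset ι} (hts : t ⊆ s)
    (e w : ι → ℝ) (hw : ∀ i ∈ s, 0 < w i) :
    (∑ i ∈ s, e i) ^ 2 / ∑ i ∈ s, w i +
        (∑ i ∈ t, w i) * ((∑ i ∈ t, e i) / (∑ i ∈ t, w i) - (∑ i ∈ s, e i) / ∑ i ∈ s, w i) ^ 2
      ≤ ∑ i ∈ s, e i ^ 2 / w i := by
  set μ := (∑ i ∈ s, e i) / ∑ i ∈ s, w i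
  have hvariance : ∑ i ∈ s, e i ^ 2 / w i
      = (∑ i ∈ s, e i) ^ 2 / (∑ i ∈ s, w i) + ∑ i ∈ s, (e i - μ * w i) ^ 2 / w i := by
    have hterm : ∀ i ∈ s,
        (e i - μ * w i) ^ 2 / w i = e i ^ 2 / w i - 2 * μ * e i + μ ^ 2 * w i := by
      intro i hi
      field_simp [(hw i hi).ne']
      ring
    rw [sum_congr rfl hterm, sum_add_distrib, sum_sub_distrib, ← mul_sum, ← mul_sum]
    rcases eq_or_ne (∑ i ∈ s, w i) 0 with h | h
    · simp [μ, h]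
    · simp only [μ]
      field_simp
      ring
  have hsub : (∑ i ∈ t, w i) * ((∑ i ∈ t, e i) / (∑ i ∈ t, w i) - μ) ^ 2
      ≤ ∑ i ∈ s, (e i - μ * w i) ^ 2 / w i :=
    calc (∑ i ∈ t, w i) * ((∑ i ∈ t, e i) / (∑ i ∈ t, w i) - μ) ^ 2
        = (∑ i ∈ t, (e i - μ * w i)) ^ 2 / ∑ i ∈ t, w i := by
          rw [sum_sub_distrib, ← mul_sum]
          rcases eq_or_ne (∑ i ∈ t, w i) 0 with h | h
          · simp [h]
          · field_simp
      _ ≤ ∑ i ∈ t, (e i - μ * w i) ^ 2 / w i :=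
          sq_sum_div_le_sum_sq_div t _ fun i hi => hw i (hts hi)
      _ ≤ ∑ i ∈ s, (e i - μ * w i) ^ 2 / w i :=
          sum_le_sum_of_subset_of_nonneg hts fun i hi _ => div_nonneg (sq_nonneg _) (hw i hi).le
  linarith

namespace Finpartition

section Bind

variable {α : Type*} [Lattice α] [OrderBot α] [IsModularLattice α] [DecidableEq α] {a : α}

lemma sum_bind_parts {M : Type*} [AddCommMonoid M] (P : Finpartition a)
    (Q : ∀ i, Finpartition i) (f : α → M) :
    ∑ p ∈ (P.bind fun i _ => Q i).parts, f p = ∑ i ∈ P.parts, ∑ p ∈ (Q i).parts, f p :=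
  (sum_combine (fun i : P.parts => Q i) P.supIndep.attach f).trans
    (sum_attach P.parts fun i => ∑ p ∈ (Q i).parts, f p)

lemma card_bind_parts (P : Finpartition a) (Q : ∀ i, Finpartition i) :
    #(P.bind fun i _ => Q i).parts = ∑ i ∈ P.parts, #(Q i).parts := by
  simpa only [card_eq_sum_ones] using sum_bind_parts P Q fun _ => 1

lemma bind_le (P : Finpartition a) (Q : ∀ i ∈ P.parts, Finpartition i) : P.bind Q ≤ P := by
  intro b hb
  obtain ⟨i, hi, hbi⟩ := mem_bind.1 hb
  exact ⟨i, hi, (Q i hi).le hbi⟩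

end Bind

variable {α : Type*} [DecidableEq α]

lemma card_mul_card_eq_sum {A B : Finset α} (π : Finpartition A) (σ : Finpartition B) :
    (#A * #B : ℝ) = ∑ pq ∈ π.parts ×ˢ σ.parts, (#pq.1 * #pq.2 : ℝ) := by
  rw [← π.sum_card_parts, ← σ.sum_card_parts, Nat.cast_sum, Nat.cast_sum, sum_mul_sum,
    sum_product]

lemma card_mul_card_pos {A B : Finset α} (π : Finpartition A) (σ : Finpartition B) :
    ∀ pq ∈ π.parts ×ˢ σ.parts, (0 : ℝ) < #pq.1 * #pq.2 := by
  intro pq hpq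
  rw [mem_product] at hpq
  have := (π.nonempty_of_mem_parts hpq.1).card_pos
  have := (σ.nonempty_of_mem_parts hpq.2).card_pos
  positivity

lemma exists_parts_subset_atomise {s t : Finset α} {F : Finset (Finset α)} (ht : t ∈ F)
    (hts : t ⊆ s) : ∃ P : Finpartition t, P.parts ⊆ (atomise s F).parts :=
  ⟨(atomise s F).ofSubset (filter_subset _ _)
      (by rw [sup_eq_biUnion]; exact biUnion_filter_atomise ht hts),
    filter_subset _ _⟩

lemma card_atomise_union_image_le {ι : Type*} (A : Finset α) (s : Finset ι)
    (f g : ι → Finset α) : #(atomise A (s.image f ∪ s.image g)).parts ≤ 4 ^ #s :=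
  calc #(atomise A (s.image f ∪ s.image g)).parts ≤ 2 ^ #(s.image f ∪ s.image g) :=
        card_atomise_le
    _ ≤ 2 ^ (#s + #s) :=
        Nat.pow_le_pow_right two_pos <|
          (card_union_le _ _).trans (add_le_add card_image_le card_image_le)
    _ = 4 ^ #s := by rw [← two_mul, pow_mul]; norm_num

lemma exists_card_parts_le_of_pos {b : ℕ} (hb : 0 < b) (t : Finset α) :
    ∃ P : Finpartition t, (∀ p ∈ P.parts, #p ≤ b) ∧ #{p ∈ P.parts | #p ≠ b} ≤ 1 := by
  induction t using Finset.strongInduction with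
  | H t ih =>
    by_cases hsmall : #t ≤ b
    · refine ⟨ofErase {t} (supIndep_singleton _ _) (sup_singleton ..), ?_, ?_⟩
      · intro p hp
        rw [mem_singleton.1 (mem_of_mem_erase hp)]
        exact hsmall
      · exact (card_filter_le _ _).trans ((card_erase_le).trans (card_singleton t).le)
    · obtain ⟨s, hst, hs⟩ := exists_subset_card_eq (not_le.1 hsmall).le
      have hs_ne : s.Nonempty := card_pos.1 (hs ▸ hb)
      obtain ⟨P, hP, hPb⟩ := ih (t \ s) (sdiff_ssubset hst hs_ne)
      refine ⟨P.extend hs_ne.ne_empty sdiff_disjoint (sdiff_union_of_subset hst), ?_, ?_⟩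
      · intro p hp
        rw [extend_parts] at hp
        rcases mem_insert.1 hp with rfl | hp
        exacts [hs.le, hP p hp]
      · rwa [extend_parts, filter_insert, if_neg (not_not.2 hs)]

lemma card_sdiff_sup_le_sum {A : Finset α} (P : Finpartition A) (C : Finset (Finset α)) :
    #(A \ C.sup id) ≤ ∑ p ∈ P.parts \ C, #p :=
  calc #(A \ C.sup id) ≤ #((P.parts \ C).sup id) := card_le_card fun x hx => by
        obtain ⟨p, hp, hxp⟩ := P.exists_mem (mem_sdiff.1 hx).1
        have hpC : p ∉ C := fun hpC => (mem_sdiff.1 hx).2 (mem_sup.2 ⟨p, hpC, hxp⟩)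
        exact mem_sup.2 ⟨p, mem_sdiff.2 ⟨hp, hpC⟩, hxp⟩
    _ ≤ ∑ p ∈ P.parts \ C, #p := by
        rw [sup_eq_biUnion]
        exact card_biUnion_le

lemma card_parts_le_of_card_filter_ne_le {ε : ℝ} (hε : 0 < ε) {A : Finset α}
    (S : Finpartition A) {b y : ℕ} (hb : 0 < b) (hy : #{p ∈ S.parts | #p ≠ b} ≤ y)
    (hyb : ε * #A ≤ y * b) :
    (#S.parts : ℝ) ≤ (1 + ε⁻¹) * y := by
  set C := {p ∈ S.parts | #p = b}
  have hC : #C * b ≤ #A :=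
    calc #C * b = ∑ p ∈ C, #p := by
          rw [sum_congr rfl fun p hp => (mem_filter.1 hp).2, sum_const, smul_eq_mul]
      _ ≤ ∑ p ∈ S.parts, #p := sum_le_sum_of_subset (filter_subset _ _)
      _ = #A := S.sum_card_parts
  have hCy : ε * #C ≤ y := by
    refine le_of_mul_le_mul_right ?_ (show (0 : ℝ) < b by positivity)
    calc ε * #C * b = ε * ((#C * b : ℕ) : ℝ) := by push_cast; ring
      _ ≤ ε * #A := by gcongr
      _ ≤ y * b := hyb
  rw [← card_filter_add_card_filter_not (s := S.parts) (#· = b)]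
  push_cast
  have := (le_inv_mul_iff₀ hε).2 hCy
  have : (#{p ∈ S.parts | #p ≠ b} : ℝ) ≤ y := by exact_mod_cast hy
  linarith

variable [Fintype α]

def ofIsPartition {P : Finset (Finset α)} (hP : IsPartition P) :
    Finpartition (univ : Finset α) where
  parts := P
  supIndep := supIndep_iff_pairwiseDisjoint.2 fun I hI J hJ hIJ => hP.2.1 I hI J hJ hIJ
  sup_parts := hP.2.2
  bot_notMem h := (hP.1 ⊥ h).ne_empty rfl

lemma isPartition_univ_parts (P : Finpartition (univ : Finset α)) : IsPartition P.parts :=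
  ⟨fun _ => P.nonempty_of_mem_parts, fun _ hI _ hJ => P.disjoint hI hJ, P.sup_parts⟩

lemma isBalanced_of_card_parts_le {ε : ℝ} (S : Finpartition (univ : Finset α)) {k y : ℕ}
    (hS : ∀ p ∈ S.parts, #p ≤ k + 1) (hy : #{p ∈ S.parts | #p ≠ k + 1} ≤ y)
    (hk : (y * k : ℝ) ≤ ε * Fintype.card α) :
    IsBalanced ε S.parts := by
  refine ⟨{p ∈ S.parts | #p = k + 1}, filter_subset _ _, fun X hX Y hY => ?_, ?_⟩
  · rw [(mem_filter.1 hX).2, (mem_filter.1 hY).2]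
  · have hsum : ∑ p ∈ S.parts \ {p ∈ S.parts | #p = k + 1}, #p ≤ y * k := by
      rw [← filter_not]
      refine (sum_le_card_nsmul _ _ k fun p hp => ?_).trans (Nat.mul_le_mul_right _ hy)
      have := hS p (mem_filter.1 hp).1
      have := (mem_filter.1 hp).2
      omega
    calc (#(univ \ {p ∈ S.parts | #p = k + 1}.sup id) : ℝ) ≤ ((y * k : ℕ) : ℝ) := by
          exact_mod_cast (S.card_sdiff_sup_le_sum _).trans hsum
      _ ≤ ε * Fintype.card α := by push_cast; exact hk

theorem exists_bind_isBalanced {ε : ℝ} (hε : 0 < ε) (R : Finpartition (univ : Finset α)) :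
    ∃ Q : ∀ I : Finset α, Finpartition I, IsBalanced ε (R.bind fun I _ => Q I).parts ∧
      (#(R.bind fun I _ => Q I).parts : ℝ) ≤ (1 + ε⁻¹) * #R.parts := by
  set n := Fintype.card α
  set y := #R.parts
  -- Remainders of chunks of size `k + 1` hold at most `y k ≤ ε n` vertices, and since
  -- `ε n ≤ y (k + 1)` there are at most `y / ε` full chunks.
  set k := ⌊ε * n / y⌋₊
  choose Q hQ hQb using fun t : Finset α => exists_card_parts_le_of_pos (b := k + 1) k.succ_pos t
  have hy : #{p ∈ (R.bind fun I _ => Q I).parts | #p ≠ k + 1} ≤ y :=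
    calc #{p ∈ (R.bind fun I _ => Q I).parts | #p ≠ k + 1}
        = ∑ I ∈ R.parts, #{p ∈ (Q I).parts | #p ≠ k + 1} := by
          simp only [card_filter, sum_bind_parts]
      _ ≤ ∑ _I ∈ R.parts, 1 := sum_le_sum fun I _ => hQb I
      _ = y := (card_eq_sum_ones _).symm
  have hk : (y * k : ℝ) ≤ ε * n := by
    rcases eq_or_ne (y : ℝ) 0 with hy | hy
    · rw [hy, zero_mul]
      positivity
    · calc (y * k : ℝ) ≤ y * (ε * n / y) := by gcongr; exact Nat.floor_le (by positivity)
        _ = ε * n := mul_div_cancel₀ _ hy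
  have hyk : ε * n ≤ y * (k + 1 : ℕ) := by
    rcases eq_or_ne (y : ℝ) 0 with hy | hy
    · have hn : n = 0 := by
        have hR : R.parts = ∅ := card_eq_zero.1 (by exact_mod_cast hy)
        show Fintype.card α = 0
        rw [← card_univ, ← R.sum_card_parts, hR, sum_empty]
      rw [hn, Nat.cast_zero, mul_zero]
      positivity
    · calc ε * n = y * (ε * n / y) := (mul_div_cancel₀ _ hy).symm
        _ ≤ y * (k + 1 : ℕ) := by gcongr; exact_mod_cast (Nat.lt_floor_add_one _).le
  refine ⟨Q, isBalanced_of_card_parts_le _ (fun p hp => ?_) hy hk,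
    card_parts_le_of_card_filter_ne_le hε _ k.succ_pos hy (by rwa [card_univ])⟩
  obtain ⟨I, -, hpI⟩ := mem_bind.1 hp
  exact hQ I p hpI

end Finpartition

lemma self_le_boundFun {ε x : ℝ} (hε : 0 ≤ ε) (hx : 0 ≤ x) : x ≤ boundFun ε x := by
  have h4 : (1 : ℝ) ≤ 4 ^ x := Real.one_le_rpow (by norm_num) hx
  have hε' : (1 : ℝ) ≤ 1 + ε⁻¹ := le_add_of_nonneg_right (inv_nonneg.2 hε)
  calc x = 1 * x * 1 := by ring
    _ ≤ (1 + ε⁻¹) * x * 4 ^ x := by gcongr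

lemma boundFun_monotoneOn {ε : ℝ} (hε : 0 ≤ ε) : MonotoneOn (boundFun ε) (Set.Ici 0) := by
  intro x hx y hy hxy
  have : 0 ≤ 1 + ε⁻¹ := by positivity
  have : (0 : ℝ) ≤ y := hy
  have : (4 : ℝ) ^ x ≤ 4 ^ y := Real.rpow_le_rpow_of_exponent_le (by norm_num) hxy
  unfold boundFun
  gcongr

namespace SimpleGraph

variable {V : Type*} (G : SimpleGraph V) [DecidableRel G.Adj]

noncomputable def pairEnergy (A B : Finset V) : ℝ := (#(G.interedges A B) : ℝ) ^ 2 / (#A * #B)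

lemma pairEnergy_nonneg (A B : Finset V) : 0 ≤ G.pairEnergy A B := by
  unfold pairEnergy
  positivity

lemma pairEnergy_le_card_mul_card (A B : Finset V) : G.pairEnergy A B ≤ #A * #B := by
  rcases eq_or_ne ((#A : ℝ) * #B) 0 with h | h
  · simp [pairEnergy, h]
  · have hle : (#(G.interedges A B) : ℝ) ≤ #A * #B := by
      exact_mod_cast G.card_interedges_le_mul A B
    rw [pairEnergy, div_le_iff₀ (lt_of_le_of_ne (by positivity) h.symm)]
    nlinarith [(#(G.interedges A B)).cast_nonneg (α := ℝ)]

noncomputable def energy (P : Finset (Finset V)) : ℝ := ∑ I ∈ P, ∑ J ∈ P, G.pairEnergy I J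

lemma energy_nonneg (P : Finset (Finset V)) : 0 ≤ G.energy P :=
  sum_nonneg fun _ _ => sum_nonneg fun _ _ => G.pairEnergy_nonneg _ _

variable [DecidableEq V] {A B X Y : Finset V}

lemma card_interedges_eq_sum (π : Finpartition A) (σ : Finpartition B) :
    (#(G.interedges A B) : ℝ) = ∑ pq ∈ π.parts ×ˢ σ.parts, (#(G.interedges pq.1 pq.2) : ℝ) := by
  exact_mod_cast Rel.card_interedges_finpartition G.Adj π σ

lemma pairEnergy_le_sum (π : Finpartition A) (σ : Finpartition B) :
    G.pairEnergy A B ≤ ∑ p ∈ π.parts, ∑ q ∈ σ.parts, G.pairEnergy p q := by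
  have := sq_sum_div_le_sum_sq_div _ (fun pq => (#(G.interedges pq.1 pq.2) : ℝ))
    (π.card_mul_card_pos σ)
  rwa [← card_interedges_eq_sum G π σ, ← π.card_mul_card_eq_sum σ, sum_product] at this

lemma energy_bind (P : Finpartition A) (Q : ∀ I : Finset V, Finpartition I) :
    G.energy (P.bind fun I _ => Q I).parts
      = ∑ I ∈ P.parts, ∑ J ∈ P.parts, ∑ p ∈ (Q I).parts, ∑ q ∈ (Q J).parts, G.pairEnergy p q := by
  simp only [energy, Finpartition.sum_bind_parts]
  exact sum_congr rfl fun _ _ => sum_comm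

lemma energy_le_energy_bind (P : Finpartition A)
    (Q : ∀ I : Finset V, Finpartition I) :
    G.energy P.parts ≤ G.energy (P.bind fun I _ => Q I).parts := by
  rw [energy_bind]
  exact sum_le_sum fun I _ => sum_le_sum fun J _ => G.pairEnergy_le_sum (Q I) (Q J)

variable [Fintype V] {ε : ℝ}

lemma pairEnergy_add_le_sum {π : Finpartition A} {σ : Finpartition B}
    {πX : Finpartition X} {σY : Finpartition Y} (hX : πX.parts ⊆ π.parts)
    (hY : σY.parts ⊆ σ.parts) :
    G.pairEnergy A B + #X * #Y * (density G X Y - density G A B) ^ 2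
      ≤ ∑ p ∈ π.parts, ∑ q ∈ σ.parts, G.pairEnergy p q := by
  have := sq_sum_div_add_mul_sq_le_sum_sq_div (product_subset_product hX hY)
    (fun pq => (#(G.interedges pq.1 pq.2) : ℝ)) _ (π.card_mul_card_pos σ)
  rwa [← card_interedges_eq_sum G π σ, ← π.card_mul_card_eq_sum σ,
    ← card_interedges_eq_sum G πX σY, ← πX.card_mul_card_eq_sum σY, sum_product] at this

lemma pairEnergy_add_le_sum_of_abs_density_sub_gt (hε : 0 ≤ ε)
    {π : Finpartition A} {σ : Finpartition B} {πX : Finpartition X} {σY : Finpartition Y}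
    (hX : πX.parts ⊆ π.parts) (hY : σY.parts ⊆ σ.parts)
    (hXcard : ε * #A < #X) (hYcard : ε * #B < #Y)
    (hdensity : ε < |density G X Y - density G A B|) :
    G.pairEnergy A B + ε ^ 4 * (#A * #B)
      ≤ ∑ p ∈ π.parts, ∑ q ∈ σ.parts, G.pairEnergy p q := by
  refine le_trans (add_le_add_right ?_ _) (G.pairEnergy_add_le_sum hX hY)
  calc ε ^ 4 * (#A * #B) = ε * #A * (ε * #B) * ε ^ 2 := by ring
    _ ≤ #X * #Y * |density G X Y - density G A B| ^ 2 := by gcongr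
    _ = #X * #Y * (density G X Y - density G A B) ^ 2 := by rw [sq_abs]

lemma energy_le_card_sq (P : Finpartition (univ : Finset V)) :
    G.energy P.parts ≤ Fintype.card V ^ 2 :=
  calc G.energy P.parts ≤ ∑ I ∈ P.parts, ∑ J ∈ P.parts, (#I * #J : ℝ) :=
        sum_le_sum fun I _ => sum_le_sum fun J _ => G.pairEnergy_le_card_mul_card I J
    _ = Fintype.card V ^ 2 := by
        rw [← sum_product', ← P.card_mul_card_eq_sum P, card_univ, sq]

open scoped Classical in
theorem exists_le_energy_add_lt_energy (hε : 0 < ε) (S : Finpartition (univ : Finset V))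
    (hS : ¬ IsRegularPartition G ε S.parts) :
    ∃ T ≤ S, #T.parts ≤ #S.parts * 4 ^ #S.parts ∧
      G.energy S.parts + ε ^ 5 * Fintype.card V ^ 2 < G.energy T.parts := by
  have hwitness : ∀ I J, ¬ IsRegularPair G ε I J → ∃ X ⊆ I, ∃ Y ⊆ J,
      ε * #I < #X ∧ ε * #J < #Y ∧ ε < |density G X Y - density G I J| := by
    intro I J h
    simpa [IsRegularPair] using h
  choose! X hXI Y hYJ hXcard hYcard hdensity using hwitness
  set Q : ∀ I : Finset V, Finpartition I := fun I =>
    Finpartition.atomise I (S.parts.image (X I) ∪ S.parts.image (Y · I))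
  refine ⟨S.bind fun I _ => Q I, S.bind_le _, ?_, ?_⟩
  · rw [Finpartition.card_bind_parts, ← smul_eq_mul, ← sum_const]
    exact sum_le_sum fun I _ => Finpartition.card_atomise_union_image_le I S.parts _ _
  · have hpair : ∀ I ∈ S.parts, ∀ J ∈ S.parts,
        G.pairEnergy I J + ε ^ 4 * (if IsRegularPair G ε I J then 0 else (#I * #J : ℝ))
          ≤ ∑ p ∈ (Q I).parts, ∑ q ∈ (Q J).parts, G.pairEnergy p q := by
      intro I hI J hJ
      split_ifs with hreg
      · simpa using G.pairEnergy_le_sum (Q I) (Q J)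
      · obtain ⟨πX, hπX⟩ := Finpartition.exists_parts_subset_atomise
          (mem_union_left _ (mem_image_of_mem (X I) hJ)) (hXI I J hreg)
        obtain ⟨σY, hσY⟩ := Finpartition.exists_parts_subset_atomise
          (mem_union_right _ (mem_image_of_mem (Y · J) hI)) (hYJ I J hreg)
        exact G.pairEnergy_add_le_sum_of_abs_density_sub_gt hε.le hπX hσY
          (hXcard I J hreg) (hYcard I J hreg) (hdensity I J hreg)
    calc G.energy S.parts + ε ^ 5 * Fintype.card V ^ 2
        = G.energy S.parts + ε ^ 4 * (ε * Fintype.card V ^ 2) := by ring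
      _ < G.energy S.parts + ε ^ 4 * ∑ I ∈ S.parts, ∑ J ∈ S.parts,
            (if IsRegularPair G ε I J then 0 else (#I * #J : ℝ)) := by
          gcongr
          exact not_le.1 hS
      _ = ∑ I ∈ S.parts, ∑ J ∈ S.parts, (G.pairEnergy I J
            + ε ^ 4 * (if IsRegularPair G ε I J then 0 else (#I * #J : ℝ))) := by
          simp only [energy, mul_sum, sum_add_distrib]
      _ ≤ _ := sum_le_sum fun I hI => sum_le_sum fun J hJ => hpair I hI J hJ
      _ = G.energy (S.bind fun I _ => Q I).parts := (G.energy_bind S Q).symm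

theorem exists_le_isBalanced_energy_le (hε : 0 < ε) (R : Finpartition (univ : Finset V)) :
    ∃ S ≤ R, IsBalanced ε S.parts ∧ (#S.parts : ℝ) ≤ (1 + ε⁻¹) * #R.parts ∧
      G.energy R.parts ≤ G.energy S.parts := by
  obtain ⟨Q, hbalanced, hcard⟩ := R.exists_bind_isBalanced hε
  exact ⟨_, R.bind_le _, hbalanced, hcard, G.energy_le_energy_bind R Q⟩

theorem exists_le_isBalanced_energy_add_lt_energy (hε : 0 < ε)
    (S : Finpartition (univ : Finset V)) (hS : ¬ IsRegularPartition G ε S.parts) :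
    ∃ T ≤ S, IsBalanced ε T.parts ∧ (#T.parts : ℝ) ≤ boundFun ε #S.parts ∧
      G.energy S.parts + ε ^ 5 * Fintype.card V ^ 2 < G.energy T.parts := by
  obtain ⟨T, hTS, hTcard, hTenergy⟩ := G.exists_le_energy_add_lt_energy hε S hS
  obtain ⟨U, hUT, hUbalanced, hUcard, hUenergy⟩ := G.exists_le_isBalanced_energy_le hε T
  refine ⟨U, hUT.trans hTS, hUbalanced, ?_, hTenergy.trans_le hUenergy⟩
  calc (#U.parts : ℝ) ≤ (1 + ε⁻¹) * #T.parts := hUcard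
    _ ≤ (1 + ε⁻¹) * (#S.parts * 4 ^ (#S.parts : ℝ)) := by
        rw [Real.rpow_natCast]
        gcongr
        exact_mod_cast hTcard
    _ = boundFun ε #S.parts := by rw [boundFun, mul_assoc]

theorem isRegularPartition_of_energy_ge (hε : 0 < ε) (S : Finpartition (univ : Finset V))
    (hS : ⌊(ε ^ 5)⁻¹⌋₊ * (ε ^ 5 * Fintype.card V ^ 2) ≤ G.energy S.parts) :
    IsRegularPartition G ε S.parts := by
  by_contra hirregular
  obtain ⟨T, -, -, hT⟩ := G.exists_le_energy_add_lt_energy hε S hirregular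
  have hfloor : 1 ≤ (⌊(ε ^ 5)⁻¹⌋₊ + 1) * ε ^ 5 :=
    (inv_le_iff_one_le_mul₀ (by positivity)).1 (Nat.lt_floor_add_one _).le
  have := G.energy_le_card_sq T
  nlinarith [sq_nonneg (Fintype.card V : ℝ)]

theorem exists_le_isBalanced_regular_or_energy_ge (hε : 0 < ε)
    (P : Finpartition (univ : Finset V)) (j : ℕ) :
    ∃ S ≤ P, IsBalanced ε S.parts ∧
      (#S.parts : ℝ) ≤ (boundFun ε)^[j] ((1 + ε⁻¹) * #P.parts) ∧
      (IsRegularPartition G ε S.parts ∨ j * (ε ^ 5 * Fintype.card V ^ 2) ≤ G.energy S.parts) := by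
  induction j with
  | zero =>
    obtain ⟨S, hSP, hbalanced, hcard, -⟩ := G.exists_le_isBalanced_energy_le hε P
    exact ⟨S, hSP, hbalanced, hcard, Or.inr (by simpa using G.energy_nonneg S.parts)⟩
  | succ j ih =>
    obtain ⟨S, hSP, hbalanced, hcard, hS⟩ := ih
    have hiterate : 0 ≤ (boundFun ε)^[j] ((1 + ε⁻¹) * #P.parts) := hcard.trans' (by positivity)
    rw [Function.iterate_succ_apply']
    by_cases hregular : IsRegularPartition G ε S.parts
    · exact ⟨S, hSP, hbalanced, hcard.trans (self_le_boundFun hε.le hiterate), Or.inl hregular⟩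
    obtain ⟨T, hTS, hTbalanced, hTcard, hTenergy⟩ :=
      G.exists_le_isBalanced_energy_add_lt_energy hε S hregular
    refine ⟨T, hTS.trans hSP, hTbalanced, ?_, Or.inr ?_⟩
    · exact hTcard.trans <|
        boundFun_monotoneOn hε.le (Set.mem_Ici.2 (Nat.cast_nonneg _)) hiterate hcard
    · push_cast
      linarith [hS.resolve_left hregular]

end SimpleGraph

/-- **Szemerédi's regularity lemma.** -/
theorem szemeredi_regularity_lemma {V : Type*} [Fintype V] [DecidableEq V]
    (ε : ℝ) (hε : 0 < ε) (G : SimpleGraph V) [DecidableRel G.Adj]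
    (P : Finset (Finset V)) (hP : IsPartition P) :
    ∃ Q : Finset (Finset V), IsPartition Q ∧ IsRefinement Q P ∧
      IsBalanced ε Q ∧ IsRegularPartition G ε Q ∧
      (Q.card : ℝ) ≤ (boundFun ε)^[⌊(ε ^ 5)⁻¹⌋₊] ((1 + ε⁻¹) * P.card) := by
  obtain ⟨S, hSP, hbalanced, hcard, hS⟩ :=
    G.exists_le_isBalanced_regular_or_energy_ge hε (Finpartition.ofIsPartition hP) ⌊(ε ^ 5)⁻¹⌋₊
  refine ⟨S.parts, S.isPartition_univ_parts, fun _ hJ => hSP hJ, hbalanced, ?_, hcard⟩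
  exact hS.elim id (G.isRegularPartition_of_energy_ge hε S)
end

section
/- Let V be a finite set, M ∈ ℝ^{V×V}, and let P and Q be partitions of V with Q a refinement of P. Then ‖M_P‖ ≤ ‖M_Q‖, where ‖·‖ is the Frobenius norm. -/
open Finset

section Aux
set_option linter.unusedSectionVars false
variable {V : Type*} [Fintype V] [DecidableEq V]

/-- The entrywise (Frobenius) inner product. -/
noncomputable def ip (A B : Matrix V V ℝ) : ℝ := ∑ i, ∑ j, A i j * B i j

lemma part_exists {P : Finset (Finset V)} (hP : IsPartition P) (i : V) :
    ∃ I ∈ P, i ∈ I := by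
  have : i ∈ P.sup id := hP.2.2 ▸ mem_univ i
  simpa using Finset.mem_sup.mp this

lemma part_unique {P : Finset (Finset V)} (hP : IsPartition P) {I I' : Finset V}
    (hI : I ∈ P) (hI' : I' ∈ P) {i : V} (hi : i ∈ I) (hi' : i ∈ I') : I = I' := by
  by_contra h
  exact (Finset.disjoint_left.mp (hP.2.1 I hI I' hI' h) hi) hi'

lemma class_eq_biUnion {P Q : Finset (Finset V)} (hP : IsPartition P) (hQ : IsPartition Q)
    (hQP : IsRefinement Q P) {I : Finset V} (hI : I ∈ P) :
    I = (Q.filter (· ⊆ I)).biUnion id := by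
  ext x
  simp only [mem_biUnion, mem_filter, id]
  constructor
  · intro hx
    obtain ⟨K, hK, hxK⟩ := part_exists hQ x
    obtain ⟨I', hI', hKI'⟩ := hQP K hK
    have hII' : I = I' := part_unique hP hI hI' hx (hKI' hxK)
    exact ⟨K, ⟨hK, hII' ▸ hKI'⟩, hxK⟩
  · rintro ⟨K, ⟨hK, hKI⟩, hxK⟩
    exact hKI hxK

lemma sum_class_decomp {P Q : Finset (Finset V)} (hP : IsPartition P) (hQ : IsPartition Q)
    (hQP : IsRefinement Q P) {I : Finset V} (hI : I ∈ P) (f : V → ℝ) :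
    ∑ x ∈ I, f x = ∑ K ∈ Q.filter (· ⊆ I), ∑ x ∈ K, f x := by
  have hdisj : (↑(Q.filter (· ⊆ I)) : Set (Finset V)).PairwiseDisjoint id := by
    intro a ha b hb hab
    simp only [coe_filter, Set.mem_setOf_eq] at ha hb
    exact hQ.2.1 a ha.1 b hb.1 hab
  conv_lhs => rw [class_eq_biUnion hP hQ hQP hI]
  rw [Finset.sum_biUnion hdisj]
  rfl

lemma sum_ite_and {I J K L : Finset V} (c : ℝ) :
    ∑ x ∈ I, ∑ y ∈ J, (if x ∈ K ∧ y ∈ L then c else 0) =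
      ((I ∩ K).card : ℝ) * ((J ∩ L).card : ℝ) * c := by
  have h1 : ∀ x : V, (∑ y ∈ J, (if x ∈ K ∧ y ∈ L then c else 0)) =
      if x ∈ K then ((J ∩ L).card : ℝ) * c else 0 := by
    intro x
    by_cases hx : x ∈ K
    · simp only [hx, true_and, if_pos]
      rw [Finset.sum_ite_mem, Finset.sum_const, nsmul_eq_mul]
    · simp [hx]
  simp only [h1]
  rw [Finset.sum_ite_mem, Finset.sum_const, nsmul_eq_mul]
  ring

/-- Summing a block projection `M_{K,L}` (with `K, L ∈ Q`) over a `P`-block `I × J`. -/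
lemma sum_proj_block {P Q : Finset (Finset V)} (hP : IsPartition P) (hQ : IsPartition Q)
    (hQP : IsRefinement Q P) {I J K L : Finset V} (hI : I ∈ P) (hJ : J ∈ P)
    (hK : K ∈ Q) (hL : L ∈ Q) (M : Matrix V V ℝ) :
    ∑ x ∈ I, ∑ y ∈ J, proj M K L x y =
      if K ⊆ I ∧ L ⊆ J then ∑ x ∈ K, ∑ y ∈ L, M x y else 0 := by
  have subdis : ∀ {A B : Finset V}, A ∈ P → B ∈ Q → B ⊆ A ∨ A ∩ B = ∅ := by
    intro A B hA hB
    obtain ⟨A', hA', hBA'⟩ := hQP B hB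
    by_cases h : A = A'
    · exact Or.inl (h ▸ hBA')
    · refine Or.inr (Finset.eq_empty_of_forall_notMem fun a ha => ?_)
      rw [mem_inter] at ha
      exact Finset.disjoint_left.mp (hP.2.1 A hA A' hA' h) ha.1 (hBA' ha.2)
  simp only [proj]
  rw [sum_ite_and]
  by_cases hKL : K ⊆ I ∧ L ⊆ J
  · rw [if_pos hKL]
    rw [Finset.inter_eq_right.mpr hKL.1, Finset.inter_eq_right.mpr hKL.2]
    have hKn : (K.card : ℝ) ≠ 0 := by
      exact_mod_cast Finset.card_ne_zero_of_mem (hQ.1 K hK).choose_spec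
    have hLn : (L.card : ℝ) ≠ 0 := by
      exact_mod_cast Finset.card_ne_zero_of_mem (hQ.1 L hL).choose_spec
    field_simp
  · rw [if_neg hKL]
    rcases not_and_or.mp hKL with h | h
    · rcases subdis hI hK with h' | h'
      · exact absurd h' h
      · rw [h']
        simp
    · rcases subdis hJ hL with h' | h'
      · exact absurd h' h
      · rw [h']
        simp

/-- Summing `M_Q` over a `P`-block `I × J` gives the sum of `M` over `I × J`. -/
lemma sum_projPartition_block {P Q : Finset (Finset V)} (hP : IsPartition P) (hQ : IsPartition Q)
    (hQP : IsRefinement Q P) {I J : Finset V} (hI : I ∈ P) (hJ : J ∈ P) (M : Matrix V V ℝ) :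
    ∑ x ∈ I, ∑ y ∈ J, projPartition M Q x y = ∑ x ∈ I, ∑ y ∈ J, M x y := by
  have lhs1 : ∑ x ∈ I, ∑ y ∈ J, projPartition M Q x y =
      ∑ K ∈ Q, ∑ L ∈ Q, ∑ x ∈ I, ∑ y ∈ J, proj M K L x y := by
    simp only [projPartition, Matrix.sum_apply]
    calc ∑ x ∈ I, ∑ y ∈ J, ∑ K ∈ Q, ∑ L ∈ Q, proj M K L x y
        = ∑ x ∈ I, ∑ K ∈ Q, ∑ y ∈ J, ∑ L ∈ Q, proj M K L x y :=
          Finset.sum_congr rfl fun x _ => Finset.sum_comm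
      _ = ∑ K ∈ Q, ∑ x ∈ I, ∑ y ∈ J, ∑ L ∈ Q, proj M K L x y := Finset.sum_comm
      _ = ∑ K ∈ Q, ∑ x ∈ I, ∑ L ∈ Q, ∑ y ∈ J, proj M K L x y :=
          Finset.sum_congr rfl fun K _ => Finset.sum_congr rfl fun x _ => Finset.sum_comm
      _ = ∑ K ∈ Q, ∑ L ∈ Q, ∑ x ∈ I, ∑ y ∈ J, proj M K L x y :=
          Finset.sum_congr rfl fun K _ => Finset.sum_comm
  rw [lhs1]
  have lhs2 : ∑ K ∈ Q, ∑ L ∈ Q, ∑ x ∈ I, ∑ y ∈ J, proj M K L x y =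
      ∑ K ∈ Q.filter (· ⊆ I), ∑ L ∈ Q.filter (· ⊆ J), ∑ x ∈ K, ∑ y ∈ L, M x y := by
    rw [Finset.sum_filter]
    refine Finset.sum_congr rfl fun K hK => ?_
    rw [Finset.sum_filter]
    by_cases hKI : K ⊆ I
    · simp only [hKI, if_true]
      refine Finset.sum_congr rfl fun L hL => ?_
      rw [sum_proj_block hP hQ hQP hI hJ hK hL M]
      by_cases hLJ : L ⊆ J
      · rw [if_pos ⟨hKI, hLJ⟩, if_pos hLJ]
      · rw [if_neg (fun h => hLJ h.2), if_neg hLJ]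
    · simp only [hKI, if_false]
      refine Finset.sum_eq_zero fun L hL => ?_
      rw [sum_proj_block hP hQ hQP hI hJ hK hL M, if_neg (fun h => hKI h.1)]
  rw [lhs2]
  rw [sum_class_decomp hP hQ hQP hI]
  refine Finset.sum_congr rfl fun K _ => ?_
  conv_lhs => rw [Finset.sum_comm]
  refine Finset.sum_congr rfl fun x _ => ?_
  exact (sum_class_decomp hP hQ hQP hJ fun y => M x y).symm

lemma ip_sum {ι : Type*} (s : Finset ι) (A : ι → Matrix V V ℝ) (B : Matrix V V ℝ) :
    ip (∑ k ∈ s, A k) B = ∑ k ∈ s, ip (A k) B := by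
  simp only [ip, Matrix.sum_apply, Finset.sum_mul]
  calc ∑ i, ∑ j, ∑ k ∈ s, A k i j * B i j
      = ∑ i, ∑ k ∈ s, ∑ j, A k i j * B i j :=
        Finset.sum_congr rfl fun i _ => Finset.sum_comm
    _ = ∑ k ∈ s, ∑ i, ∑ j, A k i j * B i j := Finset.sum_comm

lemma ip_proj_single {I J : Finset V} (M B : Matrix V V ℝ) :
    ip (proj M I J) B =
      (∑ x ∈ I, ∑ y ∈ J, M x y) * (∑ x ∈ I, ∑ y ∈ J, B x y) / (I.card * J.card) := by
  have h0 : ∀ i j : V, proj M I J i j * B i j =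
      if i ∈ I ∧ j ∈ J then ((∑ x ∈ I, ∑ y ∈ J, M x y) / (I.card * J.card)) * B i j else 0 := by
    intro i j
    simp only [proj]
    by_cases h : i ∈ I ∧ j ∈ J <;> simp [h]
  have h1 : ∀ i : V, (∑ j, if i ∈ I ∧ j ∈ J
      then ((∑ x ∈ I, ∑ y ∈ J, M x y) / (I.card * J.card)) * B i j else 0) =
      if i ∈ I then ∑ j ∈ J, ((∑ x ∈ I, ∑ y ∈ J, M x y) / (I.card * J.card)) * B i j else 0 := by
    intro i
    by_cases hi : i ∈ I
    · simp only [hi, true_and, if_pos]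
      rw [Finset.sum_ite_mem, Finset.univ_inter]
    · simp [hi]
  simp only [ip, h0, h1]
  rw [Finset.sum_ite_mem, Finset.univ_inter]
  simp only [← Finset.mul_sum]
  rw [div_mul_eq_mul_div]

lemma ip_projPartition {P : Finset (Finset V)} (M B : Matrix V V ℝ) :
    ip (projPartition M P) B = ∑ I ∈ P, ∑ J ∈ P,
      (∑ x ∈ I, ∑ y ∈ J, M x y) * (∑ x ∈ I, ∑ y ∈ J, B x y) / (I.card * J.card) := by
  rw [projPartition, ip_sum]
  refine Finset.sum_congr rfl fun I _ => ?_
  rw [ip_sum]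
  exact Finset.sum_congr rfl fun J _ => ip_proj_single M B

lemma trace_eq_ip (A : Matrix V V ℝ) : Matrix.trace (A.transpose * A) = ip A A := by
  simp only [Matrix.trace, Matrix.diag_apply, Matrix.mul_apply, Matrix.transpose_apply, ip]
  exact Finset.sum_comm

lemma ip_self_nonneg (A : Matrix V V ℝ) : 0 ≤ ip A A :=
  Finset.sum_nonneg fun i _ => Finset.sum_nonneg fun j _ => mul_self_nonneg _

lemma ip_cauchy_schwarz (A B : Matrix V V ℝ) : (ip A B) ^ 2 ≤ ip A A * ip B B := by
  have hAB : ip A B = ∑ p : V × V, A p.1 p.2 * B p.1 p.2 := by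
    rw [ip]; exact (Fintype.sum_prod_type (f := fun p => A p.1 p.2 * B p.1 p.2)).symm
  have hA : ip A A = ∑ p : V × V, (A p.1 p.2) ^ 2 := by
    simp only [ip, sq]
    exact (Fintype.sum_prod_type (f := fun p => A p.1 p.2 * A p.1 p.2)).symm
  have hB : ip B B = ∑ p : V × V, (B p.1 p.2) ^ 2 := by
    simp only [ip, sq]
    exact (Fintype.sum_prod_type (f := fun p => B p.1 p.2 * B p.1 p.2)).symm
  rw [hAB, hA, hB]
  exact Finset.sum_mul_sq_le_sq_mul_sq _ _ _

end Aux

theorem frobNorm_proj_le_of_refinement {V : Type*} [Fintype V] [DecidableEq V]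
    (M : Matrix V V ℝ) (P Q : Finset (Finset V))
    (hP : IsPartition P) (hQ : IsPartition Q) (hQP : IsRefinement Q P) :
    frobNorm (projPartition M P) ≤ frobNorm (projPartition M Q) := by
  have hPP : IsRefinement P P := fun J hJ => ⟨J, hJ, subset_rfl⟩
  have key : ip (projPartition M P) (projPartition M Q) =
      ip (projPartition M P) (projPartition M P) := by
    rw [ip_projPartition, ip_projPartition]
    refine Finset.sum_congr rfl fun I hI => Finset.sum_congr rfl fun J hJ => ?_
    rw [sum_projPartition_block hP hQ hQP hI hJ, sum_projPartition_block hP hP hPP hI hJ]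
  set a := ip (projPartition M P) (projPartition M P) with ha_def
  set b := ip (projPartition M Q) (projPartition M Q) with hb_def
  have ha : 0 ≤ a := ip_self_nonneg _
  have hb : 0 ≤ b := ip_self_nonneg _
  have hCS : a ^ 2 ≤ a * b := by
    have := ip_cauchy_schwarz (projPartition M P) (projPartition M Q)
    rwa [key] at this
  have hab : a ≤ b := by
    rcases eq_or_lt_of_le ha with h | h
    · linarith
    · nlinarith
  unfold frobNorm
  rw [trace_eq_ip, trace_eq_ip]
  exact Real.sqrt_le_sqrt hab
end

section
/- Let V be a finite set, M ∈ ℝ^{V×V}, and let P and Q be partitions of V with Q a refinement of P. Let (X_1, Y_1), …, (X_n, Y_n) be pairs of nonempty subsets of V such that the rectangles X_i × Y_i are pairwise disjoint. Then ‖M_Q‖² − ‖M_P‖² = ‖M_Q − M_P‖² ≥ Σ_{i=1}^n ‖(M_Q − M_P)_{X_i, Y_i}‖², where ‖·‖ is the Frobenius norm. -/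
set_option linter.unusedSectionVars false
set_option linter.unusedVariables false


open Finset

section
variable {V : Type*} [Fintype V] [DecidableEq V] {P Q : Finset (Finset V)}

lemma class_unique (hP : IsPartition P) {I I' : Finset V} (hI : I ∈ P) (hI' : I' ∈ P)
    {x : V} (hx : x ∈ I) (hx' : x ∈ I') : I = I' := by
  by_contra h
  exact (Finset.disjoint_left.mp (hP.2.1 I hI I' hI' h) hx) hx'

lemma sum_partition (hP : IsPartition P) (f : V → ℝ) :
    ∑ x, f x = ∑ I ∈ P, ∑ x ∈ I, f x := by
  have h : (Finset.univ : Finset V) = P.biUnion (fun K => K) := by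
    rw [← hP.2.2, Finset.sup_eq_biUnion]; rfl
  rw [h, Finset.sum_biUnion (fun I hI J hJ hIJ => hP.2.1 I hI J hJ hIJ)]

lemma inter_card (hP : IsPartition P) (hQ : IsPartition Q) (hQP : IsRefinement Q P)
    {I K : Finset V} (hI : I ∈ P) (hK : K ∈ Q) :
    I ∩ K = if K ⊆ I then K else ∅ := by
  obtain ⟨I', hI', hKI'⟩ := hQP K hK
  by_cases h : K ⊆ I
  · simp [h, Finset.inter_eq_right.mpr h]
  · simp only [h, if_false]
    have hne : I ≠ I' := by
      rintro rfl; exact h hKI'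
    rw [Finset.eq_empty_iff_forall_notMem]
    intro x hx
    rw [Finset.mem_inter] at hx
    exact Finset.disjoint_left.mp (hP.2.1 I hI I' hI' hne) hx.1 (hKI' hx.2)

lemma sum_over_class (hP : IsPartition P) (hQ : IsPartition Q) (hQP : IsRefinement Q P)
    {I : Finset V} (hI : I ∈ P) (g : V → ℝ) :
    ∑ x ∈ I, g x = ∑ K ∈ Q.filter (· ⊆ I), ∑ x ∈ K, g x := by
  have h : I = (Q.filter (· ⊆ I)).biUnion (fun K => K) := by
    ext x
    simp only [Finset.mem_biUnion, Finset.mem_filter]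
    constructor
    · intro hx
      have : x ∈ Q.sup id := by rw [hQ.2.2]; exact Finset.mem_univ x
      obtain ⟨K, hK, hxK⟩ := Finset.mem_sup.mp this
      obtain ⟨I', hI', hKI'⟩ := hQP K hK
      have : I = I' := class_unique hP hI hI' hx (hKI' hxK)
      exact ⟨K, ⟨hK, this ▸ hKI'⟩, hxK⟩
    · rintro ⟨K, ⟨_, hKI⟩, hxK⟩
      exact hKI hxK
  conv_lhs => rw [h]
  rw [Finset.sum_biUnion (fun K hK L hL hKL =>
    hQ.2.1 K (Finset.mem_filter.mp hK).1 L (Finset.mem_filter.mp hL).1 hKL)]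

end

section
variable {V : Type*} [Fintype V] [DecidableEq V] {P Q : Finset (Finset V)}

lemma frobSq (A : Matrix V V ℝ) : frobNorm A ^ 2 = ∑ i, ∑ j, A i j ^ 2 := by
  have h : Matrix.trace (A.transpose * A) = ∑ i, ∑ j, A i j ^ 2 := by
    simp only [Matrix.trace, Matrix.diag, Matrix.mul_apply, Matrix.transpose_apply, sq]
    rw [Finset.sum_comm]
  rw [frobNorm, h, Real.sq_sqrt]
  positivity

lemma ind_sum (I A : Finset V) : ∑ i ∈ I, (if i ∈ A then (1:ℝ) else 0) = (I ∩ A).card := by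
  rw [Finset.sum_ite_mem]; simp

lemma proj_apply_eq (M : Matrix V V ℝ) (A B : Finset V) (i j : V) :
    proj M A B i j = (if i ∈ A then (1:ℝ) else 0) * (if j ∈ B then 1 else 0) *
      ((∑ x ∈ A, ∑ y ∈ B, M x y) / (A.card * B.card)) := by
  unfold proj; by_cases h1 : i ∈ A <;> by_cases h2 : j ∈ B <;> simp [h1, h2]

lemma sum_proj_rect (M : Matrix V V ℝ) (A B I J : Finset V) :
    ∑ i ∈ I, ∑ j ∈ J, proj M A B i j =
      ((I ∩ A).card : ℝ) * ((J ∩ B).card : ℝ) *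
        ((∑ x ∈ A, ∑ y ∈ B, M x y) / (A.card * B.card)) := by
  simp only [proj_apply_eq]
  rw [← ind_sum I A, ← ind_sum J B, Finset.sum_mul_sum, Finset.sum_mul]
  exact Finset.sum_congr rfl fun i _ => by rw [Finset.sum_mul]

lemma projPartition_apply_s7 (M : Matrix V V ℝ) (hP : IsPartition P)
    {I J : Finset V} (hI : I ∈ P) (hJ : J ∈ P) {i j : V} (hi : i ∈ I) (hj : j ∈ J) :
    projPartition M P i j = (∑ x ∈ I, ∑ y ∈ J, M x y) / (I.card * J.card) := by
  unfold projPartition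
  rw [Matrix.sum_apply, Finset.sum_eq_single_of_mem I hI]
  · rw [Matrix.sum_apply, Finset.sum_eq_single_of_mem J hJ]
    · unfold proj; rw [if_pos ⟨hi, hj⟩]
    · intro J' hJ' hne
      unfold proj; rw [if_neg]
      rintro ⟨-, hj'⟩
      exact hne (class_unique hP hJ' hJ hj' hj)
  · intro I' hI' hne
    rw [Matrix.sum_apply]
    refine Finset.sum_eq_zero fun J' _ => ?_
    unfold proj; rw [if_neg]
    rintro ⟨hi', -⟩
    exact hne (class_unique hP hI' hI hi' hi)

lemma rect_sum_self (M : Matrix V V ℝ) (hP : IsPartition P)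
    {I J : Finset V} (hI : I ∈ P) (hJ : J ∈ P) :
    ∑ i ∈ I, ∑ j ∈ J, projPartition M P i j = ∑ x ∈ I, ∑ y ∈ J, M x y := by
  have hIne : ((I.card : ℝ)) ≠ 0 := by
    exact_mod_cast Finset.card_ne_zero_of_mem (hP.1 I hI).choose_spec
  have hJne : ((J.card : ℝ)) ≠ 0 := by
    exact_mod_cast Finset.card_ne_zero_of_mem (hP.1 J hJ).choose_spec
  calc ∑ i ∈ I, ∑ j ∈ J, projPartition M P i j
      = ∑ i ∈ I, ∑ j ∈ J, (∑ x ∈ I, ∑ y ∈ J, M x y) / (I.card * J.card) := by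
        refine Finset.sum_congr rfl fun i hi => Finset.sum_congr rfl fun j hj => ?_
        exact projPartition_apply_s7 M hP hI hJ hi hj
    _ = (I.card : ℝ) * J.card * ((∑ x ∈ I, ∑ y ∈ J, M x y) / (I.card * J.card)) := by
        simp [Finset.sum_const, mul_assoc]
    _ = ∑ x ∈ I, ∑ y ∈ J, M x y := by
        rw [mul_comm, div_mul_cancel₀]
        exact mul_ne_zero hIne hJne

lemma rect_sum_refined (M : Matrix V V ℝ) (hP : IsPartition P) (hQ : IsPartition Q)
    (hQP : IsRefinement Q P) {I J : Finset V} (hI : I ∈ P) (hJ : J ∈ P) :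
    ∑ i ∈ I, ∑ j ∈ J, projPartition M Q i j = ∑ x ∈ I, ∑ y ∈ J, M x y := by
  have step1 : ∑ i ∈ I, ∑ j ∈ J, projPartition M Q i j
      = ∑ K ∈ Q, ∑ L ∈ Q, ∑ i ∈ I, ∑ j ∈ J, proj M K L i j := by
    simp only [projPartition, Matrix.sum_apply]
    calc ∑ i ∈ I, ∑ j ∈ J, ∑ K ∈ Q, ∑ L ∈ Q, proj M K L i j
        = ∑ i ∈ I, ∑ K ∈ Q, ∑ j ∈ J, ∑ L ∈ Q, proj M K L i j :=
          Finset.sum_congr rfl fun i _ => Finset.sum_comm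
      _ = ∑ K ∈ Q, ∑ i ∈ I, ∑ j ∈ J, ∑ L ∈ Q, proj M K L i j := Finset.sum_comm
      _ = ∑ K ∈ Q, ∑ i ∈ I, ∑ L ∈ Q, ∑ j ∈ J, proj M K L i j :=
          Finset.sum_congr rfl fun K _ => Finset.sum_congr rfl fun i _ => Finset.sum_comm
      _ = ∑ K ∈ Q, ∑ L ∈ Q, ∑ i ∈ I, ∑ j ∈ J, proj M K L i j :=
          Finset.sum_congr rfl fun K _ => Finset.sum_comm
  rw [step1]
  have step2 : ∀ K ∈ Q, ∀ L ∈ Q, ∑ i ∈ I, ∑ j ∈ J, proj M K L i j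
      = (if K ⊆ I then (1:ℝ) else 0) * (if L ⊆ J then (1:ℝ) else 0)
          * ∑ x ∈ K, ∑ y ∈ L, M x y := by
    intro K hK L hL
    have hKne : ((K.card : ℝ)) ≠ 0 := by
      exact_mod_cast Finset.card_ne_zero_of_mem (hQ.1 K hK).choose_spec
    have hLne : ((L.card : ℝ)) ≠ 0 := by
      exact_mod_cast Finset.card_ne_zero_of_mem (hQ.1 L hL).choose_spec
    rw [sum_proj_rect, inter_card hP hQ hQP hI hK, inter_card hP hQ hQP hJ hL]
    by_cases h1 : K ⊆ I <;> by_cases h2 : L ⊆ J <;> simp [h1, h2]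
    rw [mul_comm, div_mul_cancel₀]
    exact mul_ne_zero hKne hLne
  calc ∑ K ∈ Q, ∑ L ∈ Q, ∑ i ∈ I, ∑ j ∈ J, proj M K L i j
      = ∑ K ∈ Q, ∑ L ∈ Q, (if K ⊆ I then (1:ℝ) else 0) * (if L ⊆ J then (1:ℝ) else 0)
          * ∑ x ∈ K, ∑ y ∈ L, M x y := by
        exact Finset.sum_congr rfl fun K hK => Finset.sum_congr rfl fun L hL => step2 K hK L hL
    _ = ∑ K ∈ Q.filter (· ⊆ I), ∑ L ∈ Q.filter (· ⊆ J), ∑ x ∈ K, ∑ y ∈ L, M x y := by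
        rw [Finset.sum_filter]
        refine Finset.sum_congr rfl fun K _ => ?_
        by_cases h1 : K ⊆ I
        · simp only [h1, if_true, one_mul]
          rw [Finset.sum_filter]
          refine Finset.sum_congr rfl fun L _ => ?_
          by_cases h2 : L ⊆ J <;> simp [h2]
        · simp [h1]
    _ = ∑ x ∈ I, ∑ y ∈ J, M x y := by
        rw [sum_over_class hP hQ hQP hI (fun x => ∑ y ∈ J, M x y)]
        refine Finset.sum_congr rfl fun K _ => ?_
        rw [Finset.sum_comm]
        refine Finset.sum_congr rfl fun x _ => ?_
        exact (sum_over_class hP hQ hQP hJ (fun y => M x y)).symm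

end

section
variable {V : Type*} [Fintype V] [DecidableEq V] {P Q : Finset (Finset V)}

lemma inner_zero (M : Matrix V V ℝ) (hP : IsPartition P) (hQ : IsPartition Q)
    (hQP : IsRefinement Q P) :
    ∑ i, ∑ j, (projPartition M Q i j - projPartition M P i j) * projPartition M P i j = 0 := by
  rw [sum_partition hP
    (fun i => ∑ j, (projPartition M Q i j - projPartition M P i j) * projPartition M P i j)]
  refine Finset.sum_eq_zero fun I hI => ?_
  have h1 : ∀ i ∈ I, ∑ j, (projPartition M Q i j - projPartition M P i j) * projPartition M P i j
      = ∑ J ∈ P, ∑ j ∈ J,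
        (projPartition M Q i j - projPartition M P i j) * projPartition M P i j :=
    fun i _ => sum_partition hP _
  rw [Finset.sum_congr rfl h1, Finset.sum_comm]
  refine Finset.sum_eq_zero fun J hJ => ?_
  have hrect : ∑ i ∈ I, ∑ j ∈ J, (projPartition M Q i j - projPartition M P i j) = 0 := by
    simp only [Finset.sum_sub_distrib]
    rw [rect_sum_refined M hP hQ hQP hI hJ, rect_sum_self M hP hI hJ, sub_self]
  calc ∑ i ∈ I, ∑ j ∈ J,
        (projPartition M Q i j - projPartition M P i j) * projPartition M P i j
      = ∑ i ∈ I, ∑ j ∈ J, (projPartition M Q i j - projPartition M P i j) *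
          ((∑ x ∈ I, ∑ y ∈ J, M x y) / (I.card * J.card)) := by
        refine Finset.sum_congr rfl fun i hi => Finset.sum_congr rfl fun j hj => ?_
        rw [projPartition_apply_s7 M hP hI hJ hi hj]
    _ = (∑ i ∈ I, ∑ j ∈ J, (projPartition M Q i j - projPartition M P i j)) *
          ((∑ x ∈ I, ∑ y ∈ J, M x y) / (I.card * J.card)) := by
        rw [Finset.sum_mul]
        exact Finset.sum_congr rfl fun i _ => by rw [Finset.sum_mul]
    _ = 0 := by rw [hrect, zero_mul]

lemma sum_ite_rect (c : ℝ) (X Y : Finset V) :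
    ∑ i, ∑ j, (if i ∈ X ∧ j ∈ Y then c else 0) = (X.card : ℝ) * Y.card * c := by
  have e : ∀ i j : V, (if i ∈ X ∧ j ∈ Y then c else 0)
      = (if i ∈ X then (1:ℝ) else 0) * (if j ∈ Y then (1:ℝ) else 0) * c := by
    intro i j; by_cases h1 : i ∈ X <;> by_cases h2 : j ∈ Y <;> simp [h1, h2]
  simp only [e]
  have hx : ∑ i : V, (if i ∈ X then (1:ℝ) else 0) = (X.card : ℝ) := by
    rw [ind_sum, Finset.univ_inter]
  have hy : ∑ j : V, (if j ∈ Y then (1:ℝ) else 0) = (Y.card : ℝ) := by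
    rw [ind_sum, Finset.univ_inter]
  rw [← hx, ← hy, Finset.sum_mul_sum, Finset.sum_mul]
  exact Finset.sum_congr rfl fun i _ => by rw [Finset.sum_mul]

lemma frob_proj_le (N : Matrix V V ℝ) {X Y : Finset V} (hX : X.Nonempty) (hY : Y.Nonempty) :
    frobNorm (proj N X Y) ^ 2 ≤ ∑ p ∈ X ×ˢ Y, N p.1 p.2 ^ 2 := by
  have hXc : (0:ℝ) < X.card := by exact_mod_cast Finset.card_pos.mpr hX
  have hYc : (0:ℝ) < Y.card := by exact_mod_cast Finset.card_pos.mpr hY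
  have hc : (0:ℝ) < (X.card : ℝ) * Y.card := mul_pos hXc hYc
  set S : ℝ := ∑ x ∈ X, ∑ y ∈ Y, N x y with hS
  have h1 : frobNorm (proj N X Y) ^ 2 = S ^ 2 / ((X.card : ℝ) * Y.card) := by
    rw [frobSq]
    have e : ∀ i j : V, proj N X Y i j ^ 2
        = if i ∈ X ∧ j ∈ Y then (S / ((X.card : ℝ) * Y.card)) ^ 2 else 0 := by
      intro i j; unfold proj
      by_cases h : i ∈ X ∧ j ∈ Y <;> simp [h, hS]
    simp only [e]
    rw [sum_ite_rect, div_pow]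
    field_simp
  rw [h1, div_le_iff₀ hc]
  have h2 : S = ∑ p ∈ X ×ˢ Y, N p.1 p.2 := by rw [Finset.sum_product]
  have h3 := sq_sum_le_card_mul_sum_sq (s := X ×ˢ Y) (f := fun p => N p.1 p.2)
  rw [← h2, Finset.card_product] at h3
  calc S ^ 2 ≤ ((X.card * Y.card : ℕ) : ℝ) * ∑ p ∈ X ×ˢ Y, N p.1 p.2 ^ 2 := by
        exact_mod_cast h3
    _ = (∑ p ∈ X ×ˢ Y, N p.1 p.2 ^ 2) * ((X.card : ℝ) * Y.card) := by
        push_cast; ring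

end


theorem pythagoras_energy_difference {V : Type*} [Fintype V] [DecidableEq V]
    (M : Matrix V V ℝ) (P Q : Finset (Finset V))
    (hP : IsPartition P) (hQ : IsPartition Q) (hQP : IsRefinement Q P)
    (n : ℕ) (X Y : Fin n → Finset V)
    (hXne : ∀ i, (X i).Nonempty) (hYne : ∀ i, (Y i).Nonempty)
    (hdisj : ∀ i j : Fin n, i ≠ j → Disjoint (X i ×ˢ Y i) (X j ×ˢ Y j)) :
    frobNorm (projPartition M Q) ^ 2 - frobNorm (projPartition M P) ^ 2 =
        frobNorm (projPartition M Q - projPartition M P) ^ 2 ∧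
      frobNorm (projPartition M Q - projPartition M P) ^ 2 ≥
        ∑ i : Fin n,
          frobNorm (proj (projPartition M Q - projPartition M P) (X i) (Y i)) ^ 2 := by
  constructor
  · rw [frobSq, frobSq, frobSq]
    have hz := inner_zero M hP hQ hQP
    have e : ∀ i j : V, (projPartition M Q i j - projPartition M P i j) ^ 2
        = projPartition M Q i j ^ 2 - projPartition M P i j ^ 2
          - 2 * ((projPartition M Q i j - projPartition M P i j) * projPartition M P i j) := by
      intro i j; ring
    have key : (∑ i, ∑ j, (projPartition M Q - projPartition M P) i j ^ 2)
        = (∑ i, ∑ j, projPartition M Q i j ^ 2) - (∑ i, ∑ j, projPartition M P i j ^ 2)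
          - 2 * ∑ i, ∑ j,
              (projPartition M Q i j - projPartition M P i j) * projPartition M P i j := by
      simp only [Matrix.sub_apply, e, Finset.sum_sub_distrib, ← Finset.mul_sum]
    rw [key, hz]
    ring
  · set N := projPartition M Q - projPartition M P with hN
    have step : ∀ i : Fin n, frobNorm (proj N (X i) (Y i)) ^ 2
        ≤ ∑ p ∈ X i ×ˢ Y i, N p.1 p.2 ^ 2 :=
      fun i => frob_proj_le N (hXne i) (hYne i)
    have hsum : ∑ i : Fin n, ∑ p ∈ X i ×ˢ Y i, N p.1 p.2 ^ 2
        ≤ ∑ p : V × V, N p.1 p.2 ^ 2 := by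
      rw [← Finset.sum_biUnion (fun a _ b _ hab => hdisj a b hab)]
      exact Finset.sum_le_sum_of_subset_of_nonneg (Finset.subset_univ _)
        (fun p _ _ => sq_nonneg _)
    have hfull : ∑ p : V × V, N p.1 p.2 ^ 2 = frobNorm N ^ 2 := by
      rw [frobSq, Fintype.sum_prod_type]
    exact le_trans (Finset.sum_le_sum fun i _ => step i) (le_of_le_of_eq hsum hfull)
end
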